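/- arXiv:1005.5072 — 4 statements merged into one kernel-verified Lean document; each statement's English description precedes it below -/
import Mathlib

section
/- Under the Scheme Hypotheses, for each common fixed point p ∈ F the limit lim_{n→∞} ‖x_n − p‖ exists (i.e., the sequence of real numbers ‖x_n − p‖ converges). -/
open Filter
set_option maxHeartbeats 1000000

lemma auxBMul (c h : ℕ → ℝ) (C : ℝ) (hc0 : ∀ n, 0 ≤ c n) (hcC : ∀ n, c n ≤ C)
    (hh0 : ∀ n, 0 ≤ h n) (hh : Summable h) : Summable fun n => c n * h n :=
  Summable.of_nonneg_of_le (fun n => mul_nonneg (hc0 n) (hh0 n))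
    (fun n => mul_le_mul_of_nonneg_right (hcC n) (hh0 n)) (hh.mul_left C)

lemma auxExp3 (f g h : ℕ → ℝ) (hf0 : ∀ n, 0 ≤ f n) (hg0 : ∀ n, 0 ≤ g n) (hh0 : ∀ n, 0 ≤ h n)
    (hf : Summable f) (hg : Summable g) (hh : Summable h) :
    Summable (fun n => (1 + f n) * (1 + g n) * (1 + h n) - 1) := by
  set C := (∑' n, f n) + (∑' n, g n) + (∑' n, h n) with hC
  have hfs : 0 ≤ ∑' n, f n := tsum_nonneg hf0
  have hgs : 0 ≤ ∑' n, g n := tsum_nonneg hg0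
  have hhs : 0 ≤ ∑' n, h n := tsum_nonneg hh0
  have hC0 : 0 ≤ C := by positivity
  have htf : ∀ n, f n ≤ C := fun n => le_trans (Summable.le_tsum hf n fun i _ => hf0 i) (by linarith)
  have htg : ∀ n, g n ≤ C := fun n => le_trans (Summable.le_tsum hg n fun i _ => hg0 i) (by linarith)
  have hth : ∀ n, h n ≤ C := fun n => le_trans (Summable.le_tsum hh n fun i _ => hh0 i) (by linarith)
  refine Summable.of_nonneg_of_le ?_ ?_ (((hf.add hg).add hh).mul_left ((1 + C)^2))
  · intro n
    have := mul_nonneg (mul_nonneg (hf0 n) (hg0 n)) (hh0 n)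
    nlinarith [hf0 n, hg0 n, hh0 n, mul_nonneg (hf0 n) (hg0 n), mul_nonneg (hg0 n) (hh0 n),
      mul_nonneg (hf0 n) (hh0 n)]
  · intro n
    have e1 : f n * g n ≤ C * g n := mul_le_mul_of_nonneg_right (htf n) (hg0 n)
    have e2 : f n * h n ≤ C * h n := mul_le_mul_of_nonneg_right (htf n) (hh0 n)
    have e3 : g n * h n ≤ C * h n := mul_le_mul_of_nonneg_right (htg n) (hh0 n)
    have e4 : f n * g n * h n ≤ C * (C * h n) := by
      calc f n * g n * h n ≤ C * g n * h n := mul_le_mul_of_nonneg_right e1 (hh0 n)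
        _ = C * (g n * h n) := by ring
        _ ≤ C * (C * h n) := mul_le_mul_of_nonneg_left e3 hC0
    have e5 : 0 ≤ C * (2 * f n + g n) := mul_nonneg hC0 (by linarith [hf0 n, hg0 n])
    have e6 : 0 ≤ C * C * (f n + g n) := mul_nonneg (mul_nonneg hC0 hC0) (by linarith [hf0 n, hg0 n])
    nlinarith [e1, e2, e3, e4, e5, e6]

lemma auxConv (u σ γ : ℕ → ℝ) (hu : ∀ n, 0 ≤ u n) (hσ0 : ∀ n, 0 ≤ σ n) (hγ0 : ∀ n, 0 ≤ γ n)
    (hσ : Summable σ) (hγ : Summable γ)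
    (hrec : ∀ n, u (n + 1) ≤ (1 + σ n) * u n + γ n) :
    ∃ L : ℝ, Tendsto u atTop (nhds L) := by
  set Sσ := ∑' n, σ n with hSσ
  set Sγ := ∑' n, γ n with hSγ
  have hSσ0 : 0 ≤ Sσ := tsum_nonneg hσ0
  have hSγ0 : 0 ≤ Sγ := tsum_nonneg hγ0
  have hpσ : ∀ n, ∑ k ∈ Finset.range n, σ k ≤ Sσ := fun n => Summable.sum_le_tsum _ (fun i _ => hσ0 i) hσ
  have hpγ : ∀ n, ∑ k ∈ Finset.range n, γ k ≤ Sγ := fun n => Summable.sum_le_tsum _ (fun i _ => hγ0 i) hγ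
  set B := (u 0 + Sγ) * Real.exp Sσ with hBdef
  have hB0 : 0 ≤ B := mul_nonneg (by linarith [hu 0]) (Real.exp_pos _).le
  have hBnd : ∀ n, u n ≤ B := by
    have key : ∀ n, u n ≤ (u 0 + ∑ k ∈ Finset.range n, γ k) *
        Real.exp (∑ k ∈ Finset.range n, σ k) := by
      intro n
      induction n with
      | zero => simp
      | succ n ih =>
        have h1 : (1 : ℝ) + σ n ≤ Real.exp (σ n) := by linarith [Real.add_one_le_exp (σ n)]
        have h2 : (0:ℝ) < Real.exp (∑ k ∈ Finset.range n, σ k) := Real.exp_pos _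
        have h3 : 1 ≤ Real.exp (∑ k ∈ Finset.range (n+1), σ k) :=
          Real.one_le_exp (Finset.sum_nonneg fun i _ => hσ0 i)
        have hGn : 0 ≤ u 0 + ∑ k ∈ Finset.range n, γ k := by
          have := Finset.sum_nonneg (fun i (_ : i ∈ Finset.range n) => hγ0 i); linarith [hu 0]
        calc u (n+1) ≤ (1 + σ n) * u n + γ n := hrec n
          _ ≤ Real.exp (σ n) * ((u 0 + ∑ k ∈ Finset.range n, γ k) *
              Real.exp (∑ k ∈ Finset.range n, σ k)) + γ n := by
            have h4 : (1 + σ n) * u n ≤ Real.exp (σ n) * u n :=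
              mul_le_mul_of_nonneg_right h1 (hu n)
            have h5 : Real.exp (σ n) * u n ≤ Real.exp (σ n) * ((u 0 + ∑ k ∈ Finset.range n, γ k) *
                Real.exp (∑ k ∈ Finset.range n, σ k)) :=
              mul_le_mul_of_nonneg_left ih (Real.exp_pos _).le
            linarith
          _ = (u 0 + ∑ k ∈ Finset.range n, γ k) * Real.exp (∑ k ∈ Finset.range (n+1), σ k)
              + γ n := by rw [Finset.sum_range_succ, Real.exp_add]; ring
          _ ≤ (u 0 + ∑ k ∈ Finset.range (n+1), γ k) *
              Real.exp (∑ k ∈ Finset.range (n+1), σ k) := by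
            rw [Finset.sum_range_succ, Finset.sum_range_succ]
            have h3' : 1 ≤ Real.exp (∑ x ∈ Finset.range n, σ x + σ n) :=
              Real.one_le_exp (by
                have := Finset.sum_nonneg (fun i (_ : i ∈ Finset.range n) => hσ0 i)
                linarith [hσ0 n])
            nlinarith [hγ0 n, h3', mul_le_mul_of_nonneg_left h3' (hγ0 n)]
    intro n
    calc u n ≤ _ := key n
      _ ≤ B := by
        apply mul_le_mul (by linarith [hpγ n]) (Real.exp_le_exp.2 (hpσ n)) (Real.exp_pos _).le
        linarith [hu 0]
  set w : ℕ → ℝ := fun n => u n - ∑ k ∈ Finset.range n, (σ k * B + γ k) with hw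
  have hδsum : Summable (fun k => σ k * B + γ k) := (hσ.mul_right B).add hγ
  have hδ0 : ∀ k, 0 ≤ σ k * B + γ k := fun k => add_nonneg (mul_nonneg (hσ0 k) hB0) (hγ0 k)
  have hwanti : Antitone w := by
    apply antitone_nat_of_succ_le
    intro n
    have h1 : u (n+1) ≤ u n + (σ n * B + γ n) := by
      have := hrec n
      nlinarith [mul_le_mul_of_nonneg_left (hBnd n) (hσ0 n)]
    simp only [hw, Finset.sum_range_succ]
    linarith
  have hwbdd : BddBelow (Set.range w) := by
    refine ⟨-(∑' k, (σ k * B + γ k)), ?_⟩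
    rintro _ ⟨n, rfl⟩
    have := Summable.sum_le_tsum (Finset.range n) (fun i _ => hδ0 i) hδsum
    simp only [hw]
    linarith [hu n]
  have hwlim : Tendsto w atTop (nhds (⨅ n, w n)) := tendsto_atTop_ciInf hwanti hwbdd
  refine ⟨(⨅ n, w n) + ∑' k, (σ k * B + γ k), ?_⟩
  have hslim : Tendsto (fun n => ∑ k ∈ Finset.range n, (σ k * B + γ k)) atTop
      (nhds (∑' k, (σ k * B + γ k))) := hδsum.hasSum.tendsto_sum_nat
  have : Tendsto (fun n => w n + ∑ k ∈ Finset.range n, (σ k * B + γ k)) atTop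
      (nhds ((⨅ n, w n) + ∑' k, (σ k * B + γ k))) := hwlim.add hslim
  simpa [hw] using this

/-- Lemma 3.4: under the scheme hypotheses, for each common fixed
point `p ∈ F` the limit `lim ‖x n - p‖` exists. -/
theorem stmt4
    {X : Type*} [NormedAddCommGroup X] [NormedSpace ℝ X] [CompleteSpace X]
    [UniformConvexSpace X]
    {K : Set X} (hKne : K.Nonempty) (hKcl : IsClosed K) (hKco : Convex ℝ K)
    {m : ℕ} (hm : 1 ≤ m)
    (T I : Fin m → X → X)
    (hTK : ∀ i, Set.MapsTo (T i) K K) (hIK : ∀ i, Set.MapsTo (I i) K K)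
    (μ lam tμ tlam : Fin m → ℕ → ℝ)
    (hμ0 : ∀ i n, 0 ≤ μ i n) (hlam0 : ∀ i n, 0 ≤ lam i n)
    (htμ0 : ∀ i n, 0 ≤ tμ i n) (htlam0 : ∀ i n, 0 ≤ tlam i n)
    (hμlim : ∀ i, Tendsto (μ i) atTop (nhds 0)) (hlamlim : ∀ i, Tendsto (lam i) atTop (nhds 0))
    (htμlim : ∀ i, Tendsto (tμ i) atTop (nhds 0))
    (htlamlim : ∀ i, Tendsto (tlam i) atTop (nhds 0))
    (hμsum : ∀ i, Summable (μ i)) (hlamsum : ∀ i, Summable (lam i))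
    (htμsum : ∀ i, Summable (tμ i)) (htlamsum : ∀ i, Summable (tlam i))
    (φ ψ : Fin m → ℝ → ℝ)
    (hφmono : ∀ i, StrictMonoOn (φ i) (Set.Ici 0))
    (hφcont : ∀ i, ContinuousOn (φ i) (Set.Ici 0))
    (hφ0 : ∀ i, φ i 0 = 0) (hφpos : ∀ i t, 0 ≤ t → 0 ≤ φ i t)
    (hψmono : ∀ i, StrictMonoOn (ψ i) (Set.Ici 0))
    (hψcont : ∀ i, ContinuousOn (ψ i) (Set.Ici 0))
    (hψ0 : ∀ i, ψ i 0 = 0) (hψpos : ∀ i t, 0 ≤ t → 0 ≤ ψ i t)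
    (hI : ∀ i, ∀ n, 1 ≤ n → ∀ x ∈ K, ∀ y ∈ K,
      ‖(I i)^[n] x - (I i)^[n] y‖ ≤ ‖x - y‖ + tμ i n * ψ i ‖x - y‖ + tlam i n)
    (hT : ∀ i, ∀ n, 1 ≤ n → ∀ x ∈ K, ∀ y ∈ K,
      ‖(T i)^[n] x - (T i)^[n] y‖ ≤
        ‖(I i)^[n] x - (I i)^[n] y‖ + μ i n * φ i ‖(I i)^[n] x - (I i)^[n] y‖ + lam i n)
    (F : Set X)
    (hFdef : ∀ p, p ∈ F ↔ p ∈ K ∧ ∀ i, T i p = p ∧ I i p = p)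
    (hFne : F.Nonempty)
    (M Ms N Ns : Fin m → ℝ)
    (hM : ∀ i, 0 < M i) (hMs : ∀ i, 0 < Ms i) (hN : ∀ i, 0 < N i) (hNs : ∀ i, 0 < Ns i)
    (hφbound : ∀ i ξ, M i ≤ ξ → φ i ξ ≤ Ms i * ξ)
    (hψbound : ∀ i ζ, N i ≤ ζ → ψ i ζ ≤ Ns i * ζ)
    (a b : Fin (m + 1) → ℕ → ℝ)
    (ha : ∀ j n, a j n ∈ Set.Ioo (0 : ℝ) 1) (hb : ∀ j n, b j n ∈ Set.Ioo (0 : ℝ) 1)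
    (hasum : ∀ n, ∑ j, a j n = 1) (hbsum : ∀ n, ∑ j, b j n = 1)
    (x y : ℕ → X) (hx0 : x 0 ∈ K)
    (hy : ∀ n, y n = b 0 n • x n + ∑ i : Fin m, b i.succ n • (I i)^[n] (x n))
    (hxrec : ∀ n, x (n + 1) = a 0 n • x n + ∑ i : Fin m, a i.succ n • (T i)^[n] (y n))
    : ∀ p ∈ F, ∃ L : ℝ, Tendsto (fun n => ‖x n - p‖) atTop (nhds L) := by
  intro p hp
  obtain ⟨hpK, hfix⟩ := (hFdef p).1 hp
  have hTp : ∀ i n, (T i)^[n] p = p := fun i n => Function.iterate_fixed (hfix i).1 n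
  have hIp : ∀ i n, (I i)^[n] p = p := fun i n => Function.iterate_fixed (hfix i).2 n
  -- gauge bounds
  have hφb : ∀ i ξ, 0 ≤ ξ → φ i ξ ≤ φ i (M i) + Ms i * ξ := by
    intro i ξ hξ
    rcases le_or_gt ξ (M i) with h | h
    · have h1 : φ i ξ ≤ φ i (M i) :=
        (hφmono i).monotoneOn (Set.mem_Ici.2 hξ) (Set.mem_Ici.2 (hM i).le) h
      nlinarith [mul_nonneg (hMs i).le hξ]
    · have h1 := hφbound i ξ h.le
      linarith [hφpos i (M i) (hM i).le]
  have hψb : ∀ i ζ, 0 ≤ ζ → ψ i ζ ≤ ψ i (N i) + Ns i * ζ := by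
    intro i ζ hζ
    rcases le_or_gt ζ (N i) with h | h
    · have h1 : ψ i ζ ≤ ψ i (N i) :=
        (hψmono i).monotoneOn (Set.mem_Ici.2 hζ) (Set.mem_Ici.2 (hN i).le) h
      nlinarith [mul_nonneg (hNs i).le hζ]
    · have h1 := hψbound i ζ h.le
      linarith [hψpos i (N i) (hN i).le]
  -- iterates map K to K
  have hIKn : ∀ (i : Fin m) n, Set.MapsTo ((I i)^[n]) K K := fun i n => (hIK i).iterate n
  have hTKn : ∀ (i : Fin m) n, Set.MapsTo ((T i)^[n]) K K := fun i n => (hTK i).iterate n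
  -- membership of x n and y n in K
  have hxyK : ∀ n, x n ∈ K ∧ y n ∈ K := by
    have hyK : ∀ n, x n ∈ K → y n ∈ K := by
      intro n hxn
      rw [hy n]
      have hrep : b 0 n • x n + ∑ i : Fin m, b i.succ n • (I i)^[n] (x n)
          = ∑ j : Fin (m+1), b j n • Fin.cons (x n) (fun i => (I i)^[n] (x n)) j := by
        rw [Fin.sum_univ_succ]; simp
      rw [hrep]
      refine hKco.sum_mem (fun j _ => (hb j n).1.le) (hbsum n) (fun j _ => ?_)
      refine Fin.cases ?_ ?_ j
      · simpa using hxn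
      · intro i; simpa using hIKn i n hxn
    intro n
    induction n with
    | zero => exact ⟨hx0, hyK 0 hx0⟩
    | succ n ih =>
      have hxn1 : x (n+1) ∈ K := by
        rw [hxrec n]
        have hrep : a 0 n • x n + ∑ i : Fin m, a i.succ n • (T i)^[n] (y n)
            = ∑ j : Fin (m+1), a j n • Fin.cons (x n) (fun i => (T i)^[n] (y n)) j := by
          rw [Fin.sum_univ_succ]; simp
        rw [hrep]
        refine hKco.sum_mem (fun j _ => (ha j n).1.le) (hasum n) (fun j _ => ?_)
        refine Fin.cases ?_ ?_ j
        · simpa using ih.1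
        · intro i; simpa using hTKn i n ih.2
      exact ⟨hxn1, hyK (n+1) hxn1⟩
  have hxK : ∀ n, x n ∈ K := fun n => (hxyK n).1
  have hyK : ∀ n, y n ∈ K := fun n => (hxyK n).2
  -- convex combination norm estimate
  have hcomb : ∀ (w : Fin (m+1) → ℝ) (z : Fin (m+1) → X), (∀ j, 0 ≤ w j) → (∑ j, w j) = 1 →
      ‖(∑ j, w j • z j) - p‖ ≤ ∑ j, w j * ‖z j - p‖ := by
    intro w z hw hw1
    have h1 : (∑ j, w j • z j) - p = ∑ j, w j • (z j - p) := by
      simp only [smul_sub, Finset.sum_sub_distrib, ← Finset.sum_smul, hw1, one_smul]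
    rw [h1]
    refine (norm_sum_le _ _).trans_eq ?_
    refine Finset.sum_congr rfl fun j _ => ?_
    rw [norm_smul, Real.norm_eq_abs, abs_of_nonneg (hw j)]
  -- small sequences
  set g1 : Fin m → ℕ → ℝ := fun i n => tμ i n * Ns i with hg1def
  set g2 : Fin m → ℕ → ℝ := fun i n => tμ i n * ψ i (N i) + tlam i n with hg2def
  set f1 : Fin m → ℕ → ℝ := fun i n => μ i n * Ms i with hf1def
  set f2 : Fin m → ℕ → ℝ := fun i n => μ i n * φ i (M i) + lam i n with hf2def
  have hg10 : ∀ i n, 0 ≤ g1 i n := fun i n => mul_nonneg (htμ0 i n) (hNs i).le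
  have hg20 : ∀ i n, 0 ≤ g2 i n := fun i n =>
    add_nonneg (mul_nonneg (htμ0 i n) (hψpos i (N i) (hN i).le)) (htlam0 i n)
  have hf10 : ∀ i n, 0 ≤ f1 i n := fun i n => mul_nonneg (hμ0 i n) (hMs i).le
  have hf20 : ∀ i n, 0 ≤ f2 i n := fun i n =>
    add_nonneg (mul_nonneg (hμ0 i n) (hφpos i (M i) (hM i).le)) (hlam0 i n)
  have hg1s : ∀ i, Summable (g1 i) := fun i => (htμsum i).mul_right _
  have hg2s : ∀ i, Summable (g2 i) := fun i => ((htμsum i).mul_right _).add (htlamsum i)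
  have hf1s : ∀ i, Summable (f1 i) := fun i => (hμsum i).mul_right _
  have hf2s : ∀ i, Summable (f2 i) := fun i => ((hμsum i).mul_right _).add (hlamsum i)
  set tC : ℕ → ℝ := fun n => ∑ i : Fin m, g1 i n with htCdef
  set tD : ℕ → ℝ := fun n => ∑ i : Fin m, g2 i n with htDdef
  have htC0 : ∀ n, 0 ≤ tC n := fun n => Finset.sum_nonneg fun i _ => hg10 i n
  have htD0 : ∀ n, 0 ≤ tD n := fun n => Finset.sum_nonneg fun i _ => hg20 i n
  have htCs : Summable tC := summable_sum fun i _ => hg1s i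
  have htDs : Summable tD := summable_sum fun i _ => hg2s i
  -- pointwise estimates
  have hIest : ∀ (i : Fin m) n, 1 ≤ n → ∀ z ∈ K,
      ‖(I i)^[n] z - p‖ ≤ (1 + g1 i n) * ‖z - p‖ + g2 i n := by
    intro i n hn z hz
    have h1 := hI i n hn z hz p hpK
    rw [hIp i n] at h1
    have h2 := hψb i ‖z - p‖ (norm_nonneg _)
    have h3 : tμ i n * ψ i ‖z - p‖ ≤ tμ i n * (ψ i (N i) + Ns i * ‖z - p‖) :=
      mul_le_mul_of_nonneg_left h2 (htμ0 i n)
    simp only [hg1def, hg2def]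
    nlinarith
  have hTest : ∀ (i : Fin m) n, 1 ≤ n → ∀ z ∈ K,
      ‖(T i)^[n] z - p‖ ≤ (1 + f1 i n) * ((1 + g1 i n) * ‖z - p‖ + g2 i n) + f2 i n := by
    intro i n hn z hz
    have h1 := hT i n hn z hz p hpK
    rw [hTp i n, hIp i n] at h1
    have h2 := hφb i ‖(I i)^[n] z - p‖ (norm_nonneg _)
    have h3 : μ i n * φ i ‖(I i)^[n] z - p‖ ≤
        μ i n * (φ i (M i) + Ms i * ‖(I i)^[n] z - p‖) :=
      mul_le_mul_of_nonneg_left h2 (hμ0 i n)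
    have h4 : ‖(T i)^[n] z - p‖ ≤ (1 + f1 i n) * ‖(I i)^[n] z - p‖ + f2 i n := by
      simp only [hf1def, hf2def]; nlinarith
    have h5 := hIest i n hn z hz
    have h6 : (1 + f1 i n) * ‖(I i)^[n] z - p‖ ≤
        (1 + f1 i n) * ((1 + g1 i n) * ‖z - p‖ + g2 i n) :=
      mul_le_mul_of_nonneg_left h5 (by linarith [hf10 i n])
    linarith
  -- estimate for y
  have hYest : ∀ n, 1 ≤ n → ‖y n - p‖ ≤ (1 + tC n) * ‖x n - p‖ + tD n := by
    intro n hn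
    have hb1 : ∑ i : Fin m, b i.succ n = 1 - b 0 n := by
      have := hbsum n; rw [Fin.sum_univ_succ] at this; linarith
    have hrep : y n = ∑ j : Fin (m+1), b j n • Fin.cons (x n) (fun i => (I i)^[n] (x n)) j := by
      rw [hy n, Fin.sum_univ_succ]; simp
    rw [hrep]
    refine le_trans (hcomb _ _ (fun j => (hb j n).1.le) (hbsum n)) ?_
    rw [Fin.sum_univ_succ]
    simp only [Fin.cons_zero, Fin.cons_succ]
    have hstep : ∀ i : Fin m, b i.succ n * ‖(I i)^[n] (x n) - p‖ ≤
        b i.succ n * ‖x n - p‖ + (g1 i n * ‖x n - p‖ + g2 i n) := by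
      intro i
      have h1 := hIest i n hn (x n) (hxK n)
      have hbi := hb i.succ n
      have hnn : 0 ≤ g1 i n * ‖x n - p‖ + g2 i n :=
        add_nonneg (mul_nonneg (hg10 i n) (norm_nonneg _)) (hg20 i n)
      calc b i.succ n * ‖(I i)^[n] (x n) - p‖
          ≤ b i.succ n * ((1 + g1 i n) * ‖x n - p‖ + g2 i n) :=
            mul_le_mul_of_nonneg_left h1 hbi.1.le
        _ = b i.succ n * ‖x n - p‖ + b i.succ n * (g1 i n * ‖x n - p‖ + g2 i n) := by ring
        _ ≤ b i.succ n * ‖x n - p‖ + (g1 i n * ‖x n - p‖ + g2 i n) := by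
            nlinarith [mul_le_of_le_one_left hnn hbi.2.le]
    have hsum2 : ∑ i : Fin m, b i.succ n * ‖(I i)^[n] (x n) - p‖ ≤
        ∑ i : Fin m, (b i.succ n * ‖x n - p‖ + (g1 i n * ‖x n - p‖ + g2 i n)) :=
      Finset.sum_le_sum fun i _ => hstep i
    have heq : ∑ i : Fin m, (b i.succ n * ‖x n - p‖ + (g1 i n * ‖x n - p‖ + g2 i n))
        = (1 - b 0 n) * ‖x n - p‖ + (tC n * ‖x n - p‖ + tD n) := by
      rw [Finset.sum_add_distrib, Finset.sum_add_distrib, ← Finset.sum_mul, hb1,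
        ← Finset.sum_mul]
    simp only [htCdef, htDdef] at heq ⊢
    nlinarith [hsum2, heq]
  -- estimate for x
  set σ' : ℕ → ℝ := fun n => ∑ i : Fin m, ((1 + f1 i n) * (1 + g1 i n) * (1 + tC n) - 1)
    with hσ'def
  set γ' : ℕ → ℝ := fun n =>
    ∑ i : Fin m, ((1 + f1 i n) * ((1 + g1 i n) * tD n + g2 i n) + f2 i n) with hγ'def
  have hσ'0 : ∀ n, 0 ≤ σ' n := by
    intro n
    refine Finset.sum_nonneg fun i _ => ?_
    nlinarith [hf10 i n, hg10 i n, htC0 n, mul_nonneg (hf10 i n) (hg10 i n),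
      mul_nonneg (hf10 i n) (htC0 n), mul_nonneg (hg10 i n) (htC0 n),
      mul_nonneg (mul_nonneg (hf10 i n) (hg10 i n)) (htC0 n)]
  have hγ'0 : ∀ n, 0 ≤ γ' n := by
    intro n
    refine Finset.sum_nonneg fun i _ => ?_
    have h1 : 0 ≤ (1 + g1 i n) * tD n + g2 i n :=
      add_nonneg (mul_nonneg (by linarith [hg10 i n]) (htD0 n)) (hg20 i n)
    have := mul_nonneg (by linarith [hf10 i n] : (0:ℝ) ≤ 1 + f1 i n) h1
    linarith [hf20 i n]
  have hXest : ∀ n, 1 ≤ n → ‖x (n+1) - p‖ ≤ (1 + σ' n) * ‖x n - p‖ + γ' n := by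
    intro n hn
    have ha1 : ∑ i : Fin m, a i.succ n = 1 - a 0 n := by
      have := hasum n; rw [Fin.sum_univ_succ] at this; linarith
    have hrep : x (n+1) = ∑ j : Fin (m+1), a j n • Fin.cons (x n) (fun i => (T i)^[n] (y n)) j := by
      rw [hxrec n, Fin.sum_univ_succ]; simp
    rw [hrep]
    refine le_trans (hcomb _ _ (fun j => (ha j n).1.le) (hasum n)) ?_
    rw [Fin.sum_univ_succ]
    simp only [Fin.cons_zero, Fin.cons_succ]
    have hTi : ∀ i : Fin m, ‖(T i)^[n] (y n) - p‖ ≤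
        ((1 + f1 i n) * (1 + g1 i n) * (1 + tC n)) * ‖x n - p‖ +
          ((1 + f1 i n) * ((1 + g1 i n) * tD n + g2 i n) + f2 i n) := by
      intro i
      have h1 := hTest i n hn (y n) (hyK n)
      have h2 := hYest n hn
      have h3 : (1 + g1 i n) * ‖y n - p‖ ≤ (1 + g1 i n) * ((1 + tC n) * ‖x n - p‖ + tD n) :=
        mul_le_mul_of_nonneg_left h2 (by linarith [hg10 i n])
      have h4 : (1 + f1 i n) * ((1 + g1 i n) * ‖y n - p‖ + g2 i n) ≤
          (1 + f1 i n) * ((1 + g1 i n) * ((1 + tC n) * ‖x n - p‖ + tD n) + g2 i n) :=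
        mul_le_mul_of_nonneg_left (by linarith) (by linarith [hf10 i n])
      have h5 : (1 + f1 i n) * ((1 + g1 i n) * ((1 + tC n) * ‖x n - p‖ + tD n) + g2 i n) + f2 i n
          = ((1 + f1 i n) * (1 + g1 i n) * (1 + tC n)) * ‖x n - p‖ +
            ((1 + f1 i n) * ((1 + g1 i n) * tD n + g2 i n) + f2 i n) := by ring
      linarith
    have hstep : ∀ i : Fin m, a i.succ n * ‖(T i)^[n] (y n) - p‖ ≤
        a i.succ n * ‖x n - p‖ +
          (((1 + f1 i n) * (1 + g1 i n) * (1 + tC n) - 1) * ‖x n - p‖ +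
            ((1 + f1 i n) * ((1 + g1 i n) * tD n + g2 i n) + f2 i n)) := by
      intro i
      have hai := ha i.succ n
      have hQ1 : 1 ≤ (1 + f1 i n) * (1 + g1 i n) * (1 + tC n) := by
        nlinarith [hf10 i n, hg10 i n, htC0 n, mul_nonneg (hf10 i n) (hg10 i n),
          mul_nonneg (hf10 i n) (htC0 n), mul_nonneg (hg10 i n) (htC0 n),
          mul_nonneg (mul_nonneg (hf10 i n) (hg10 i n)) (htC0 n)]
      have hR0 : 0 ≤ (1 + f1 i n) * ((1 + g1 i n) * tD n + g2 i n) + f2 i n := by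
        have h1 : 0 ≤ (1 + g1 i n) * tD n + g2 i n :=
          add_nonneg (mul_nonneg (by linarith [hg10 i n]) (htD0 n)) (hg20 i n)
        have := mul_nonneg (by linarith [hf10 i n] : (0:ℝ) ≤ 1 + f1 i n) h1
        linarith [hf20 i n]
      have hnn : 0 ≤ ((1 + f1 i n) * (1 + g1 i n) * (1 + tC n) - 1) * ‖x n - p‖ +
          ((1 + f1 i n) * ((1 + g1 i n) * tD n + g2 i n) + f2 i n) :=
        add_nonneg (mul_nonneg (by linarith) (norm_nonneg _)) hR0
      calc a i.succ n * ‖(T i)^[n] (y n) - p‖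
          ≤ a i.succ n * (((1 + f1 i n) * (1 + g1 i n) * (1 + tC n)) * ‖x n - p‖ +
              ((1 + f1 i n) * ((1 + g1 i n) * tD n + g2 i n) + f2 i n)) :=
            mul_le_mul_of_nonneg_left (hTi i) hai.1.le
        _ = a i.succ n * ‖x n - p‖ + a i.succ n *
              (((1 + f1 i n) * (1 + g1 i n) * (1 + tC n) - 1) * ‖x n - p‖ +
                ((1 + f1 i n) * ((1 + g1 i n) * tD n + g2 i n) + f2 i n)) := by ring
        _ ≤ _ := by nlinarith [mul_le_of_le_one_left hnn hai.2.le]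
    have hsum2 : ∑ i : Fin m, a i.succ n * ‖(T i)^[n] (y n) - p‖ ≤
        ∑ i : Fin m, (a i.succ n * ‖x n - p‖ +
          (((1 + f1 i n) * (1 + g1 i n) * (1 + tC n) - 1) * ‖x n - p‖ +
            ((1 + f1 i n) * ((1 + g1 i n) * tD n + g2 i n) + f2 i n))) :=
      Finset.sum_le_sum fun i _ => hstep i
    have heq : ∑ i : Fin m, (a i.succ n * ‖x n - p‖ +
          (((1 + f1 i n) * (1 + g1 i n) * (1 + tC n) - 1) * ‖x n - p‖ +
            ((1 + f1 i n) * ((1 + g1 i n) * tD n + g2 i n) + f2 i n)))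
        = (1 - a 0 n) * ‖x n - p‖ + (σ' n * ‖x n - p‖ + γ' n) := by
      rw [Finset.sum_add_distrib, Finset.sum_add_distrib, ← Finset.sum_mul, ha1,
        ← Finset.sum_mul, hσ'def, hγ'def]
    nlinarith [hsum2, heq]
  -- summability of σ' and γ'
  have hσ's : Summable σ' :=
    summable_sum fun i _ => auxExp3 (f1 i) (g1 i) tC (hf10 i) (hg10 i) htC0
      (hf1s i) (hg1s i) htCs
  have hγ's : Summable γ' := by
    refine summable_sum fun i _ => ?_
    have hb1 : ∀ n, g1 i n ≤ ∑' k, g1 i k := fun n => Summable.le_tsum (hg1s i) n fun k _ => hg10 i k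
    have hbf : ∀ n, f1 i n ≤ ∑' k, f1 i k := fun n => Summable.le_tsum (hf1s i) n fun k _ => hf10 i k
    have hin : Summable (fun n => (1 + g1 i n) * tD n + g2 i n) := by
      refine Summable.add ?_ (hg2s i)
      exact auxBMul _ _ (1 + ∑' k, g1 i k) (fun n => by linarith [hg10 i n])
        (fun n => by linarith [hb1 n]) htD0 htDs
    have hin0 : ∀ n, 0 ≤ (1 + g1 i n) * tD n + g2 i n := fun n =>
      add_nonneg (mul_nonneg (by linarith [hg10 i n]) (htD0 n)) (hg20 i n)
    refine Summable.add ?_ (hf2s i)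
    exact auxBMul _ _ (1 + ∑' k, f1 i k) (fun n => by linarith [hf10 i n])
      (fun n => by linarith [hbf n]) hin0 hin
  -- conclude via auxConv on shifted sequence
  obtain ⟨L, hL⟩ := auxConv (fun n => ‖x (n+1) - p‖) (fun n => σ' (n+1)) (fun n => γ' (n+1))
    (fun n => norm_nonneg _) (fun n => hσ'0 _) (fun n => hγ'0 _)
    ((summable_nat_add_iff 1).2 hσ's) ((summable_nat_add_iff 1).2 hγ's)
    (fun n => hXest (n+1) (Nat.le_add_left 1 n))
  exact ⟨L, (tendsto_add_atTop_iff_nat (f := fun n => ‖x n - p‖) 1).1 hL⟩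
end

section
/- Under the Scheme Hypotheses, assume additionally that all the maps T_1, …, T_m and I_1, …, I_m are continuous. Then the explicit iterative sequence {x_n} converges strongly (in norm) to a common fixed point in F if and only if liminf_{n→∞} d(x_n, F) = 0, where d(x, F) = inf_{p∈F} ‖x − p‖. -/
open Filter


lemma aux_summable_mul {f g : ℕ → ℝ} (hf : Summable f) (hg : Summable g)
    (hf0 : ∀ n, 0 ≤ f n) (hg0 : ∀ n, 0 ≤ g n) : Summable (fun n => f n * g n) := by
  refine Summable.of_nonneg_of_le (fun n => mul_nonneg (hf0 n) (hg0 n))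
    (fun n => ?_) (hf.mul_right (∑' n, g n))
  exact mul_le_mul_of_nonneg_left (Summable.le_tsum hg n (fun j _ => hg0 j)) (hf0 n)

lemma aux_combo {X : Type*} [NormedAddCommGroup X] [NormedSpace ℝ X] {k : ℕ}
    (c : Fin k → ℝ) (v : Fin k → X) (p : X) (hc1 : ∑ j, c j = 1) (hc0 : ∀ j, 0 ≤ c j) :
    ‖(∑ j, c j • v j) - p‖ ≤ ∑ j, c j * ‖v j - p‖ := by
  have h : (∑ j, c j • v j) - p = ∑ j, c j • (v j - p) := by
    simp [smul_sub, Finset.sum_sub_distrib, ← Finset.sum_smul, hc1]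
  rw [h]
  calc ‖∑ j, c j • (v j - p)‖ ≤ ∑ j, ‖c j • (v j - p)‖ := norm_sum_le _ _
    _ = ∑ j, c j * ‖v j - p‖ := by
        refine Finset.sum_congr rfl fun j _ => ?_
        rw [norm_smul, Real.norm_of_nonneg (hc0 j)]

lemma aux_growth (u σ ρ : ℕ → ℝ) (hu0 : ∀ n, 0 ≤ u n) (hσ0 : ∀ n, 0 ≤ σ n)
    (hρ0 : ∀ n, 0 ≤ ρ n) (k : ℕ)
    (hrec : ∀ n, k ≤ n → u (n + 1) ≤ (1 + σ n) * u n + ρ n) :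
    ∀ n, k ≤ n → u n ≤ Real.exp (∑ j ∈ Finset.Ico k n, σ j) *
      (u k + ∑ j ∈ Finset.Ico k n, ρ j) := by
  intro n hn
  induction n with
  | zero =>
      have : k = 0 := Nat.le_zero.mp hn
      subst this; simp
  | succ n ih =>
      rcases Nat.lt_or_ge k (n + 1) with h | h
      · have hkn : k ≤ n := Nat.lt_succ_iff.mp h
        have ihn := ih hkn
        have h1 : u (n + 1) ≤ (1 + σ n) * u n + ρ n := hrec n hkn
        have hexp : (1 + σ n) ≤ Real.exp (σ n) := by
          have := Real.add_one_le_exp (σ n); linarith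
        have hE0 : (0:ℝ) < Real.exp (∑ j ∈ Finset.Ico k n, σ j) := Real.exp_pos _
        have hsum0 : 0 ≤ u k + ∑ j ∈ Finset.Ico k n, ρ j :=
          add_nonneg (hu0 k) (Finset.sum_nonneg fun j _ => hρ0 j)
        rw [Finset.sum_Ico_succ_top hkn, Finset.sum_Ico_succ_top hkn, Real.exp_add]
        have hE1 : (1:ℝ) ≤ Real.exp (∑ j ∈ Finset.Ico k n, σ j) * Real.exp (σ n) := by
          rw [← Real.exp_add]
          exact Real.one_le_exp (add_nonneg (Finset.sum_nonneg fun j _ => hσ0 j) (hσ0 n))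
        calc u (n + 1) ≤ (1 + σ n) * u n + ρ n := h1
          _ ≤ Real.exp (σ n) * (Real.exp (∑ j ∈ Finset.Ico k n, σ j) *
                (u k + ∑ j ∈ Finset.Ico k n, ρ j)) + ρ n := by
              have h2 : (1 + σ n) * u n ≤ Real.exp (σ n) * u n :=
                mul_le_mul_of_nonneg_right hexp (hu0 n)
              have h3 : Real.exp (σ n) * u n ≤ Real.exp (σ n) * (Real.exp (∑ j ∈ Finset.Ico k n, σ j) * (u k + ∑ j ∈ Finset.Ico k n, ρ j)) :=
                mul_le_mul_of_nonneg_left ihn (Real.exp_pos _).le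
              linarith
          _ ≤ Real.exp (∑ j ∈ Finset.Ico k n, σ j) * Real.exp (σ n) *
                ((u k + ∑ j ∈ Finset.Ico k n, ρ j) + ρ n) := by
              have : ρ n ≤ Real.exp (∑ j ∈ Finset.Ico k n, σ j) * Real.exp (σ n) * ρ n := by
                nlinarith [hρ0 n]
              nlinarith [hρ0 n]
          _ = Real.exp (∑ j ∈ Finset.Ico k n, σ j) * Real.exp (σ n) *
                (u k + (∑ j ∈ Finset.Ico k n, ρ j + ρ n)) := by ring
      · have : k = n + 1 := le_antisymm hn h
        subst this; simp


set_option maxHeartbeats 1000000 in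
/-- Theorem 3.5: under the scheme hypotheses with all maps continuous,
the iterative sequence converges strongly to a common fixed point in `F` iff
`liminf d(x n, F) = 0`. -/
theorem stmt5
    {X : Type*} [NormedAddCommGroup X] [NormedSpace ℝ X] [CompleteSpace X]
    [UniformConvexSpace X]
    {K : Set X} (hKne : K.Nonempty) (hKcl : IsClosed K) (hKco : Convex ℝ K)
    {m : ℕ} (hm : 1 ≤ m)
    (T I : Fin m → X → X)
    (hTK : ∀ i, Set.MapsTo (T i) K K) (hIK : ∀ i, Set.MapsTo (I i) K K)
    (hTcont : ∀ i, ContinuousOn (T i) K) (hIcont : ∀ i, ContinuousOn (I i) K)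
    (μ lam tμ tlam : Fin m → ℕ → ℝ)
    (hμ0 : ∀ i n, 0 ≤ μ i n) (hlam0 : ∀ i n, 0 ≤ lam i n)
    (htμ0 : ∀ i n, 0 ≤ tμ i n) (htlam0 : ∀ i n, 0 ≤ tlam i n)
    (hμlim : ∀ i, Tendsto (μ i) atTop (nhds 0)) (hlamlim : ∀ i, Tendsto (lam i) atTop (nhds 0))
    (htμlim : ∀ i, Tendsto (tμ i) atTop (nhds 0))
    (htlamlim : ∀ i, Tendsto (tlam i) atTop (nhds 0))
    (hμsum : ∀ i, Summable (μ i)) (hlamsum : ∀ i, Summable (lam i))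
    (htμsum : ∀ i, Summable (tμ i)) (htlamsum : ∀ i, Summable (tlam i))
    (φ ψ : Fin m → ℝ → ℝ)
    (hφmono : ∀ i, StrictMonoOn (φ i) (Set.Ici 0))
    (hφcont : ∀ i, ContinuousOn (φ i) (Set.Ici 0))
    (hφ0 : ∀ i, φ i 0 = 0) (hφpos : ∀ i t, 0 ≤ t → 0 ≤ φ i t)
    (hψmono : ∀ i, StrictMonoOn (ψ i) (Set.Ici 0))
    (hψcont : ∀ i, ContinuousOn (ψ i) (Set.Ici 0))
    (hψ0 : ∀ i, ψ i 0 = 0) (hψpos : ∀ i t, 0 ≤ t → 0 ≤ ψ i t)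
    (hI : ∀ i, ∀ n, 1 ≤ n → ∀ x ∈ K, ∀ y ∈ K,
      ‖(I i)^[n] x - (I i)^[n] y‖ ≤ ‖x - y‖ + tμ i n * ψ i ‖x - y‖ + tlam i n)
    (hT : ∀ i, ∀ n, 1 ≤ n → ∀ x ∈ K, ∀ y ∈ K,
      ‖(T i)^[n] x - (T i)^[n] y‖ ≤
        ‖(I i)^[n] x - (I i)^[n] y‖ + μ i n * φ i ‖(I i)^[n] x - (I i)^[n] y‖ + lam i n)
    (F : Set X)
    (hFdef : ∀ p, p ∈ F ↔ p ∈ K ∧ ∀ i, T i p = p ∧ I i p = p)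
    (hFne : F.Nonempty)
    (M Ms N Ns : Fin m → ℝ)
    (hM : ∀ i, 0 < M i) (hMs : ∀ i, 0 < Ms i) (hN : ∀ i, 0 < N i) (hNs : ∀ i, 0 < Ns i)
    (hφbound : ∀ i ξ, M i ≤ ξ → φ i ξ ≤ Ms i * ξ)
    (hψbound : ∀ i ζ, N i ≤ ζ → ψ i ζ ≤ Ns i * ζ)
    (a b : Fin (m + 1) → ℕ → ℝ)
    (ha : ∀ j n, a j n ∈ Set.Ioo (0 : ℝ) 1) (hb : ∀ j n, b j n ∈ Set.Ioo (0 : ℝ) 1)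
    (hasum : ∀ n, ∑ j, a j n = 1) (hbsum : ∀ n, ∑ j, b j n = 1)
    (x y : ℕ → X) (hx0 : x 0 ∈ K)
    (hy : ∀ n, y n = b 0 n • x n + ∑ i : Fin m, b i.succ n • (I i)^[n] (x n))
    (hxrec : ∀ n, x (n + 1) = a 0 n • x n + ∑ i : Fin m, a i.succ n • (T i)^[n] (y n))
    : (∃ p ∈ F, Tendsto x atTop (nhds p)) ↔
      Filter.liminf (fun n => Metric.infDist (x n) F) atTop = 0 := by
  constructor
  · rintro ⟨p, hpF, hxp⟩
    have h1 : Tendsto (fun n => Metric.infDist (x n) F) atTop (nhds 0) := by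
      refine squeeze_zero (fun n => Metric.infDist_nonneg)
        (fun n => Metric.infDist_le_dist_of_mem hpF) ?_
      exact tendsto_iff_dist_tendsto_zero.mp hxp
    exact h1.liminf_eq
  · intro hlim
    -- basic nonnegativity facts
    have hψN : ∀ i, 0 ≤ ψ i (N i) := fun i => hψpos i _ (hN i).le
    have hφM : ∀ i, 0 ≤ φ i (M i) := fun i => hφpos i _ (hM i).le
    -- membership of the iterates in K
    have hImaps : ∀ i n, Set.MapsTo ((I i)^[n]) K K := fun i n => (hIK i).iterate n
    have hTmaps : ∀ i n, Set.MapsTo ((T i)^[n]) K K := fun i n => (hTK i).iterate n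
    have hyrep : ∀ n, y n = ∑ j : Fin (m+1), b j n •
        (Fin.cases (x n) (fun i => (I i)^[n] (x n)) j : X) := by
      intro n; rw [hy n, Fin.sum_univ_succ]; simp
    have hxrep : ∀ n, x (n+1) = ∑ j : Fin (m+1), a j n •
        (Fin.cases (x n) (fun i => (T i)^[n] (y n)) j : X) := by
      intro n; rw [hxrec n, Fin.sum_univ_succ]; simp
    have hxK : ∀ n, x n ∈ K := by
      intro n
      induction n with
      | zero => exact hx0
      | succ n ih =>
          have hyn : y n ∈ K := by
            rw [hyrep n]
            refine hKco.sum_mem (fun j _ => (hb j n).1.le) (hbsum n) (fun j _ => ?_)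
            induction j using Fin.cases with
            | zero => simpa using ih
            | succ i => simpa using hImaps i n ih
          rw [hxrep n]
          refine hKco.sum_mem (fun j _ => (ha j n).1.le) (hasum n) (fun j _ => ?_)
          induction j using Fin.cases with
          | zero => simpa using ih
          | succ i => simpa using hTmaps i n hyn
    have hyK : ∀ n, y n ∈ K := by
      intro n
      rw [hyrep n]
      refine hKco.sum_mem (fun j _ => (hb j n).1.le) (hbsum n) (fun j _ => ?_)
      induction j using Fin.cases with
      | zero => simpa using hxK n
      | succ i => simpa using hImaps i n (hxK n)
    -- the coefficient sequences
    set Pc : Fin m → ℕ → ℝ := fun i n => (1 + μ i n * Ms i) * (1 + tμ i n * Ns i) with hPcdef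
    set Qc : Fin m → ℕ → ℝ := fun i n =>
      (1 + μ i n * Ms i) * (tμ i n * ψ i (N i) + tlam i n) + (μ i n * φ i (M i) + lam i n)
      with hQcdef
    set Gc : ℕ → ℝ := fun n => 1 + ∑ i, tμ i n * Ns i with hGcdef
    set Hc : ℕ → ℝ := fun n => ∑ i, (tμ i n * ψ i (N i) + tlam i n) with hHcdef
    set Rc : ℕ → ℝ := fun n => 1 + ∑ i, (Pc i n - 1) with hRcdef
    set σc : ℕ → ℝ := fun n => Rc n * Gc n - 1 with hσcdef
    set ρc : ℕ → ℝ := fun n => Rc n * Hc n + ∑ i, Qc i n with hρcdef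
    have hPc1 : ∀ i n, 1 ≤ Pc i n := by
      intro i n
      have h1 := mul_nonneg (hμ0 i n) (hMs i).le
      have h2 := mul_nonneg (htμ0 i n) (hNs i).le
      simp only [hPcdef]; nlinarith
    have hQc0 : ∀ i n, 0 ≤ Qc i n := by
      intro i n
      have h1 := mul_nonneg (hμ0 i n) (hMs i).le
      have h2 := mul_nonneg (htμ0 i n) (hψN i)
      have h3 := mul_nonneg (hμ0 i n) (hφM i)
      have := htlam0 i n; have := hlam0 i n
      simp only [hQcdef]; nlinarith
    have hGc1 : ∀ n, 1 ≤ Gc n := by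
      intro n
      have : 0 ≤ ∑ i, tμ i n * Ns i :=
        Finset.sum_nonneg fun i _ => mul_nonneg (htμ0 i n) (hNs i).le
      simp only [hGcdef]; linarith
    have hHc0 : ∀ n, 0 ≤ Hc n := by
      intro n
      exact Finset.sum_nonneg fun i _ =>
        add_nonneg (mul_nonneg (htμ0 i n) (hψN i)) (htlam0 i n)
    have hRc1 : ∀ n, 1 ≤ Rc n := by
      intro n
      have : 0 ≤ ∑ i, (Pc i n - 1) :=
        Finset.sum_nonneg fun i _ => by linarith [hPc1 i n]
      simp only [hRcdef]; linarith
    have hσc0 : ∀ n, 0 ≤ σc n := by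
      intro n
      have := hRc1 n; have := hGc1 n
      simp only [hσcdef]; nlinarith
    have hρc0 : ∀ n, 0 ≤ ρc n := by
      intro n
      have h1 : (0:ℝ) ≤ ∑ i, Qc i n := Finset.sum_nonneg fun i _ => hQc0 i n
      have := hRc1 n; have := hHc0 n
      simp only [hρcdef]; nlinarith
    -- summability
    have hsumPm1 : ∀ i, Summable (fun n => Pc i n - 1) := by
      intro i
      have he : (fun n => Pc i n - 1) = fun n =>
          μ i n * Ms i + (tμ i n * Ns i + (μ i n * Ms i) * (tμ i n * Ns i)) := by
        funext n; simp only [hPcdef]; ring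
      rw [he]
      exact ((hμsum i).mul_right _).add (((htμsum i).mul_right _).add
        (aux_summable_mul ((hμsum i).mul_right _) ((htμsum i).mul_right _)
          (fun n => mul_nonneg (hμ0 i n) (hMs i).le)
          (fun n => mul_nonneg (htμ0 i n) (hNs i).le)))
    have hsumGm1 : Summable (fun n => Gc n - 1) := by
      have he : (fun n => Gc n - 1) = fun n => ∑ i, tμ i n * Ns i := by
        funext n; simp only [hGcdef]; ring
      rw [he]
      exact summable_sum fun i _ => (htμsum i).mul_right _
    have hsumRm1 : Summable (fun n => Rc n - 1) := by
      have he : (fun n => Rc n - 1) = fun n => ∑ i, (Pc i n - 1) := by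
        funext n; simp only [hRcdef]; ring
      rw [he]
      exact summable_sum fun i _ => hsumPm1 i
    have hsumH : Summable Hc := by
      refine summable_sum fun i _ => Summable.add ((htμsum i).mul_right _) (htlamsum i)
    have hsumQ : ∀ i, Summable (Qc i) := by
      intro i
      have he : Qc i = fun n => (tμ i n * ψ i (N i) + tlam i n)
          + (μ i n * Ms i) * (tμ i n * ψ i (N i) + tlam i n)
          + (μ i n * φ i (M i) + lam i n) := by
        funext n; simp only [hQcdef]; ring
      rw [he]
      refine (Summable.add (((htμsum i).mul_right _).add (htlamsum i))
        (aux_summable_mul ((hμsum i).mul_right _)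
          (((htμsum i).mul_right _).add (htlamsum i))
          (fun n => mul_nonneg (hμ0 i n) (hMs i).le)
          (fun n => add_nonneg (mul_nonneg (htμ0 i n) (hψN i)) (htlam0 i n)))).add
        (((hμsum i).mul_right _).add (hlamsum i))
    have hGm10 : ∀ n, 0 ≤ Gc n - 1 := fun n => by linarith [hGc1 n]
    have hRm10 : ∀ n, 0 ≤ Rc n - 1 := fun n => by linarith [hRc1 n]
    have hGle : ∀ n, Gc n ≤ 1 + ∑' n, (Gc n - 1) := by
      intro n
      have := Summable.le_tsum hsumGm1 n (fun j _ => hGm10 j)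
      linarith
    have hRle : ∀ n, Rc n ≤ 1 + ∑' n, (Rc n - 1) := by
      intro n
      have := Summable.le_tsum hsumRm1 n (fun j _ => hRm10 j)
      linarith
    have hsumσ : Summable σc := by
      set UG := 1 + ∑' n, (Gc n - 1) with hUG
      refine Summable.of_nonneg_of_le hσc0 (fun n => ?_)
        ((hsumRm1.mul_right UG).add hsumGm1)
      have h1 : σc n = (Rc n - 1) * Gc n + (Gc n - 1) := by simp only [hσcdef]; ring
      have h2 : (Rc n - 1) * Gc n ≤ (Rc n - 1) * UG :=
        mul_le_mul_of_nonneg_left (hGle n) (hRm10 n)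
      linarith
    have hsumρ : Summable ρc := by
      set UR := 1 + ∑' n, (Rc n - 1) with hUR
      have hQQ : Summable (fun n => ∑ i : Fin m, Qc i n) :=
        summable_sum fun i _ => hsumQ i
      refine Summable.of_nonneg_of_le hρc0 (fun n => ?_)
        ((hsumH.mul_left UR).add hQQ)
      have h2 : Rc n * Hc n ≤ UR * Hc n :=
        mul_le_mul_of_nonneg_right (hRle n) (hHc0 n)
      simp only [hρcdef]
      linarith
    -- the key recursion
    have hψb : ∀ i t, 0 ≤ t → ψ i t ≤ ψ i (N i) + Ns i * t := by
      intro i t ht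
      rcases le_total t (N i) with h | h
      · have h1 : ψ i t ≤ ψ i (N i) :=
          (hψmono i).monotoneOn (Set.mem_Ici.2 ht) (Set.mem_Ici.2 (hN i).le) h
        have h2 : 0 ≤ Ns i * t := mul_nonneg (hNs i).le ht
        linarith
      · have h1 := hψbound i t h
        have h2 := hψN i
        linarith
    have hφb : ∀ i t, 0 ≤ t → φ i t ≤ φ i (M i) + Ms i * t := by
      intro i t ht
      rcases le_total t (M i) with h | h
      · have h1 : φ i t ≤ φ i (M i) :=
          (hφmono i).monotoneOn (Set.mem_Ici.2 ht) (Set.mem_Ici.2 (hM i).le) h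
        have h2 : 0 ≤ Ms i * t := mul_nonneg (hMs i).le ht
        linarith
      · have h1 := hφbound i t h
        have h2 := hφM i
        linarith
    have hkey : ∀ p ∈ F, ∀ n, 1 ≤ n →
        ‖x (n+1) - p‖ ≤ Rc n * Gc n * ‖x n - p‖ + ρc n := by
      intro p hp n hn
      obtain ⟨hpK, hpTI⟩ := (hFdef p).1 hp
      have hIfix : ∀ i (k : ℕ), (I i)^[k] p = p := fun i k =>
        Function.iterate_fixed (hpTI i).2 k
      have hTfix : ∀ i (k : ℕ), (T i)^[k] p = p := fun i k =>
        Function.iterate_fixed (hpTI i).1 k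
      have hlemI : ∀ i, ∀ z ∈ K, ‖(I i)^[n] z - p‖ ≤
          (1 + tμ i n * Ns i) * ‖z - p‖ + (tμ i n * ψ i (N i) + tlam i n) := by
        intro i z hz
        have h1 : ‖(I i)^[n] z - p‖ ≤ ‖z - p‖ + tμ i n * ψ i ‖z - p‖ + tlam i n := by
          have := hI i n hn z hz p hpK
          rwa [hIfix i n] at this
        have h2 := hψb i ‖z - p‖ (norm_nonneg _)
        have h3 := htμ0 i n
        nlinarith
      have hlemT : ∀ i, ∀ z ∈ K, ‖(T i)^[n] z - p‖ ≤
          Pc i n * ‖z - p‖ + Qc i n := by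
        intro i z hz
        have h1 : ‖(T i)^[n] z - p‖ ≤
            ‖(I i)^[n] z - p‖ + μ i n * φ i ‖(I i)^[n] z - p‖ + lam i n := by
          have := hT i n hn z hz p hpK
          rwa [hIfix i n, hTfix i n] at this
        have h2 := hφb i ‖(I i)^[n] z - p‖ (norm_nonneg _)
        have h3 := hμ0 i n
        have h4 := hlemI i z hz
        have h5 : (0:ℝ) ≤ 1 + μ i n * Ms i := by
          nlinarith [mul_nonneg (hμ0 i n) (hMs i).le]
        have h6 : μ i n * φ i ‖(I i)^[n] z - p‖ ≤
            μ i n * (φ i (M i) + Ms i * ‖(I i)^[n] z - p‖) :=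
          mul_le_mul_of_nonneg_left h2 h3
        have h7 : ‖(T i)^[n] z - p‖ ≤
            (1 + μ i n * Ms i) * ‖(I i)^[n] z - p‖ + (μ i n * φ i (M i) + lam i n) := by
          nlinarith
        have h8 : (1 + μ i n * Ms i) * ‖(I i)^[n] z - p‖ ≤
            (1 + μ i n * Ms i) *
              ((1 + tμ i n * Ns i) * ‖z - p‖ + (tμ i n * ψ i (N i) + tlam i n)) :=
          mul_le_mul_of_nonneg_left h4 h5
        simp only [hPcdef, hQcdef]
        nlinarith
      have ht0 : (0:ℝ) ≤ ‖x n - p‖ := norm_nonneg _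
      -- bound for y n
      have hsy : ‖y n - p‖ ≤ Gc n * ‖x n - p‖ + Hc n := by
        have h0 : ‖y n - p‖ ≤ ∑ j : Fin (m+1), b j n *
            ‖(Fin.cases (x n) (fun i => (I i)^[n] (x n)) j : X) - p‖ := by
          rw [hyrep n]
          exact aux_combo _ _ _ (hbsum n) (fun j => (hb j n).1.le)
        rw [Fin.sum_univ_succ] at h0
        simp only [Fin.cases_zero, Fin.cases_succ] at h0
        have h2 : ∑ i : Fin m, b i.succ n * ‖(I i)^[n] (x n) - p‖ ≤
            ∑ i : Fin m, b i.succ n *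
              ((1 + tμ i n * Ns i) * ‖x n - p‖ + (tμ i n * ψ i (N i) + tlam i n)) :=
          Finset.sum_le_sum fun i _ =>
            mul_le_mul_of_nonneg_left (hlemI i (x n) (hxK n)) (hb i.succ n).1.le
        have h3 : ∑ i : Fin m, b i.succ n *
              ((1 + tμ i n * Ns i) * ‖x n - p‖ + (tμ i n * ψ i (N i) + tlam i n)) ≤
            ∑ i : Fin m, (b i.succ n * ‖x n - p‖ +
              ((tμ i n * Ns i) * ‖x n - p‖ + (tμ i n * ψ i (N i) + tlam i n))) := by
          refine Finset.sum_le_sum fun i _ => ?_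
          have hb1 : b i.succ n ≤ 1 := (hb i.succ n).2.le
          have hb0 : (0:ℝ) ≤ b i.succ n := (hb i.succ n).1.le
          have hnn : (0:ℝ) ≤ (tμ i n * Ns i) * ‖x n - p‖ + (tμ i n * ψ i (N i) + tlam i n) := by
            have := mul_nonneg (mul_nonneg (htμ0 i n) (hNs i).le) ht0
            have := mul_nonneg (htμ0 i n) (hψN i)
            have := htlam0 i n
            linarith
          nlinarith [mul_nonneg (by linarith : (0:ℝ) ≤ 1 - b i.succ n) hnn]
        have h4 : b 0 n + ∑ i : Fin m, b i.succ n = 1 := by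
          have := hbsum n; rwa [Fin.sum_univ_succ] at this
        have h5 : ∑ i : Fin m, (b i.succ n * ‖x n - p‖ +
              ((tμ i n * Ns i) * ‖x n - p‖ + (tμ i n * ψ i (N i) + tlam i n)))
            = (∑ i : Fin m, b i.succ n) * ‖x n - p‖ +
              ((∑ i : Fin m, tμ i n * Ns i) * ‖x n - p‖ + Hc n) := by
          rw [Finset.sum_add_distrib, Finset.sum_add_distrib, ← Finset.sum_mul, ← Finset.sum_mul]
        have h6 : Gc n * ‖x n - p‖ + Hc n =
            1 * ‖x n - p‖ + ((∑ i : Fin m, tμ i n * Ns i) * ‖x n - p‖ + Hc n) := by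
          simp only [hGcdef]; ring
        rw [h6, ← h4]
        have h7 : b 0 n * ‖x n - p‖ + ∑ i : Fin m, (b i.succ n * ‖x n - p‖ +
              ((tμ i n * Ns i) * ‖x n - p‖ + (tμ i n * ψ i (N i) + tlam i n)))
            = (b 0 n + ∑ i : Fin m, b i.succ n) * ‖x n - p‖ +
              ((∑ i : Fin m, tμ i n * Ns i) * ‖x n - p‖ + Hc n) := by
          rw [h5]; ring
        linarith [h0, h2, h3, h7.le, h7.ge]
      -- bound for x (n+1)
      have hGH0 : (0:ℝ) ≤ Gc n * ‖x n - p‖ + Hc n := by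
        have := hGc1 n; have := hHc0 n; nlinarith
      have hts' : ‖x n - p‖ ≤ Gc n * ‖x n - p‖ + Hc n := by
        have := hGc1 n; have := hHc0 n; nlinarith
      have h0 : ‖x (n+1) - p‖ ≤ ∑ j : Fin (m+1), a j n *
          ‖(Fin.cases (x n) (fun i => (T i)^[n] (y n)) j : X) - p‖ := by
        rw [hxrep n]
        exact aux_combo _ _ _ (hasum n) (fun j => (ha j n).1.le)
      rw [Fin.sum_univ_succ] at h0
      simp only [Fin.cases_zero, Fin.cases_succ] at h0
      have h1 : ∀ i : Fin m, ‖(T i)^[n] (y n) - p‖ ≤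
          Pc i n * (Gc n * ‖x n - p‖ + Hc n) + Qc i n := by
        intro i
        have ha' := hlemT i (y n) (hyK n)
        have hb' : Pc i n * ‖y n - p‖ ≤ Pc i n * (Gc n * ‖x n - p‖ + Hc n) :=
          mul_le_mul_of_nonneg_left hsy (by linarith [hPc1 i n])
        linarith
      have h2 : ∑ i : Fin m, a i.succ n * ‖(T i)^[n] (y n) - p‖ ≤
          ∑ i : Fin m, a i.succ n * (Pc i n * (Gc n * ‖x n - p‖ + Hc n) + Qc i n) :=
        Finset.sum_le_sum fun i _ =>
          mul_le_mul_of_nonneg_left (h1 i) (ha i.succ n).1.le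
      have h3 : ∑ i : Fin m, a i.succ n * (Pc i n * (Gc n * ‖x n - p‖ + Hc n) + Qc i n) ≤
          ∑ i : Fin m, (a i.succ n * (Gc n * ‖x n - p‖ + Hc n) +
            ((Pc i n - 1) * (Gc n * ‖x n - p‖ + Hc n) + Qc i n)) := by
        refine Finset.sum_le_sum fun i _ => ?_
        have ha1 : a i.succ n ≤ 1 := (ha i.succ n).2.le
        have ha0 : (0:ℝ) ≤ a i.succ n := (ha i.succ n).1.le
        have hnn : (0:ℝ) ≤ (Pc i n - 1) * (Gc n * ‖x n - p‖ + Hc n) + Qc i n :=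
          add_nonneg (mul_nonneg (by linarith [hPc1 i n]) hGH0) (hQc0 i n)
        nlinarith [mul_nonneg (by linarith : (0:ℝ) ≤ 1 - a i.succ n) hnn]
      have h4 : a 0 n + ∑ i : Fin m, a i.succ n = 1 := by
        have := hasum n; rwa [Fin.sum_univ_succ] at this
      have h5 : ∑ i : Fin m, (a i.succ n * (Gc n * ‖x n - p‖ + Hc n) +
            ((Pc i n - 1) * (Gc n * ‖x n - p‖ + Hc n) + Qc i n))
          = (∑ i : Fin m, a i.succ n) * (Gc n * ‖x n - p‖ + Hc n) +
            ((∑ i : Fin m, (Pc i n - 1)) * (Gc n * ‖x n - p‖ + Hc n) +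
              ∑ i : Fin m, Qc i n) := by
        rw [Finset.sum_add_distrib, Finset.sum_add_distrib, ← Finset.sum_mul, ← Finset.sum_mul]
      have h6 : a 0 n * ‖x n - p‖ ≤ a 0 n * (Gc n * ‖x n - p‖ + Hc n) :=
        mul_le_mul_of_nonneg_left hts' (ha 0 n).1.le
      have h7 : ‖x (n+1) - p‖ ≤
          (a 0 n + ∑ i : Fin m, a i.succ n) * (Gc n * ‖x n - p‖ + Hc n) +
            ((∑ i : Fin m, (Pc i n - 1)) * (Gc n * ‖x n - p‖ + Hc n) +
              ∑ i : Fin m, Qc i n) := by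
        rw [add_mul]
        linarith [h0, h2, h3, h5.le, h6]
      rw [h4, one_mul] at h7
      have h8 : Rc n * Gc n * ‖x n - p‖ + ρc n =
          (Gc n * ‖x n - p‖ + Hc n) +
            ((∑ i : Fin m, (Pc i n - 1)) * (Gc n * ‖x n - p‖ + Hc n) +
              ∑ i : Fin m, Qc i n) := by
        simp only [hRcdef, hρcdef]; ring
      linarith [h7, h8.le, h8.ge]
    -- growth bound
    set Ec := Real.exp (∑' n, σc n) with hEcdef
    have hEc1 : 1 ≤ Ec := Real.one_le_exp (tsum_nonneg hσc0)
    have hEc0 : (0:ℝ) < Ec := lt_of_lt_of_le one_pos hEc1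
    set tail : ℕ → ℝ := fun k => ∑' j, ρc (j + k) with htaildef
    have htailnn : ∀ k, 0 ≤ tail k := fun k => tsum_nonneg (fun j => hρc0 _)
    have htailsum : ∀ k, Summable (fun j => ρc (j + k)) :=
      fun k => (summable_nat_add_iff k).2 hsumρ
    have htailtend : Tendsto tail atTop (nhds 0) := tendsto_sum_nat_add ρc
    have hbound : ∀ p ∈ F, ∀ k n, 1 ≤ k → k ≤ n →
        ‖x n - p‖ ≤ Ec * (‖x k - p‖ + tail k) := by
      intro p hp k n hk1 hkn
      have hrec : ∀ j, k ≤ j → ‖x (j+1) - p‖ ≤ (1 + σc j) * ‖x j - p‖ + ρc j := by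
        intro j hj
        have h := hkey p hp j (le_trans hk1 hj)
        have he : (1 + σc j) = Rc j * Gc j := by simp only [hσcdef]; ring
        rw [he]; exact h
      have hg := aux_growth (fun j => ‖x j - p‖) σc ρc (fun j => norm_nonneg _)
        hσc0 hρc0 k hrec n hkn
      have h1 : Real.exp (∑ j ∈ Finset.Ico k n, σc j) ≤ Ec := by
        apply Real.exp_le_exp.2
        exact Summable.sum_le_tsum _ (fun j _ => hσc0 j) hsumσ
      have h2 : ∑ j ∈ Finset.Ico k n, ρc j ≤ tail k := by
        rw [Finset.sum_Ico_eq_sum_range]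
        have he : ∀ j ∈ Finset.range (n - k), ρc (k + j) = ρc (j + k) := by
          intro j _; rw [Nat.add_comm]
        rw [Finset.sum_congr rfl he]
        exact Summable.sum_le_tsum _ (fun j _ => hρc0 _) (htailsum k)
      have h3 : (0:ℝ) ≤ ‖x k - p‖ + ∑ j ∈ Finset.Ico k n, ρc j :=
        add_nonneg (norm_nonneg _) (Finset.sum_nonneg fun j _ => hρc0 j)
      calc ‖x n - p‖ ≤ Real.exp (∑ j ∈ Finset.Ico k n, σc j) *
            (‖x k - p‖ + ∑ j ∈ Finset.Ico k n, ρc j) := hg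
        _ ≤ Ec * (‖x k - p‖ + tail k) :=
            mul_le_mul h1 (by linarith) h3 hEc0.le
    -- frequently small infDist
    obtain ⟨p₀, hp₀⟩ := id hFne
    have hbddabove : IsBoundedUnder (· ≤ ·) atTop (fun n => Metric.infDist (x n) F) := by
      refine ⟨Ec * (‖x 1 - p₀‖ + tail 1), ?_⟩
      rw [eventually_map]
      filter_upwards [eventually_ge_atTop 1] with n hn
      calc Metric.infDist (x n) F ≤ dist (x n) p₀ := Metric.infDist_le_dist_of_mem hp₀
        _ = ‖x n - p₀‖ := dist_eq_norm _ _
        _ ≤ Ec * (‖x 1 - p₀‖ + tail 1) := hbound p₀ hp₀ 1 n le_rfl hn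
    have hfreq : ∀ ε, 0 < ε → ∃ᶠ n in atTop, Metric.infDist (x n) F < ε := by
      intro ε hε
      exact frequently_lt_of_liminf_lt hbddabove.isCoboundedUnder_ge
        (by rw [hlim]; exact hε)
    -- Cauchy sequence
    have hcauchy : CauchySeq x := by
      rw [Metric.cauchySeq_iff]
      intro ε hε
      have hε' : 0 < ε / (8 * Ec) := by positivity
      have hev : ∀ᶠ k in atTop, tail k < ε / (8 * Ec) ∧ 1 ≤ k :=
        (htailtend.eventually (gt_mem_nhds hε')).and (eventually_ge_atTop 1)
      obtain ⟨k, hkd, hkt, hk1⟩ := ((hfreq _ hε').and_eventually hev).exists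
      obtain ⟨p, hpF, hpk⟩ := (Metric.infDist_lt_iff hFne).1 hkd
      have hxkp : ‖x k - p‖ < ε / (8 * Ec) := by rwa [← dist_eq_norm]
      refine ⟨k, fun n1 hn1 n2 hn2 => ?_⟩
      have hb1 : ‖x n1 - p‖ ≤ Ec * (ε / (8 * Ec) + ε / (8 * Ec)) :=
        le_trans (hbound p hpF k n1 hk1 hn1)
          (mul_le_mul_of_nonneg_left (by linarith) hEc0.le)
      have hb2 : ‖x n2 - p‖ ≤ Ec * (ε / (8 * Ec) + ε / (8 * Ec)) :=
        le_trans (hbound p hpF k n2 hk1 hn2)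
          (mul_le_mul_of_nonneg_left (by linarith) hEc0.le)
      have hEce : Ec * (ε / (8 * Ec) + ε / (8 * Ec)) = ε / 4 := by
        have hne : Ec ≠ 0 := ne_of_gt hEc0
        calc Ec * (ε / (8 * Ec) + ε / (8 * Ec)) = (Ec / Ec) * (ε / 4) := by ring
          _ = ε / 4 := by rw [div_self hne, one_mul]
      rw [hEce] at hb1 hb2
      calc dist (x n1) (x n2) ≤ dist (x n1) p + dist p (x n2) := dist_triangle _ _ _
        _ = ‖x n1 - p‖ + ‖x n2 - p‖ := by
            rw [dist_eq_norm, dist_comm p (x n2), dist_eq_norm]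
        _ ≤ ε / 4 + ε / 4 := add_le_add hb1 hb2
        _ < ε := by linarith only [hε]
    obtain ⟨q, hq⟩ := cauchySeq_tendsto_of_complete hcauchy
    -- F is closed
    have hFcl : IsClosed F := by
      apply IsSeqClosed.isClosed
      intro z q' hzF hzq
      have hzK : ∀ n, z n ∈ K := fun n => ((hFdef _).1 (hzF n)).1
      have hq'K : q' ∈ K := hKcl.mem_of_tendsto hzq (Eventually.of_forall hzK)
      refine (hFdef q').2 ⟨hq'K, fun i => ?_⟩
      have hzn : Tendsto z atTop (nhdsWithin q' K) :=
        tendsto_nhdsWithin_of_tendsto_nhds_of_eventually_within z hzq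
          (Eventually.of_forall hzK)
      constructor
      · have hTz : Tendsto (fun n => T i (z n)) atTop (nhds (T i q')) :=
          ((hTcont i) q' hq'K).tendsto.comp hzn
        have he : (fun n => T i (z n)) = z :=
          funext fun n => (((hFdef _).1 (hzF n)).2 i).1
        rw [he] at hTz
        exact tendsto_nhds_unique hTz hzq
      · have hIz : Tendsto (fun n => I i (z n)) atTop (nhds (I i q')) :=
          ((hIcont i) q' hq'K).tendsto.comp hzn
        have he : (fun n => I i (z n)) = z :=
          funext fun n => (((hFdef _).1 (hzF n)).2 i).2
        rw [he] at hIz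
        exact tendsto_nhds_unique hIz hzq
    refine ⟨q, ?_, hq⟩
    rw [hFcl.mem_iff_infDist_zero hFne]
    refine le_antisymm ?_ Metric.infDist_nonneg
    by_contra hcon
    push_neg at hcon
    have hδ : 0 < Metric.infDist q F / 3 := by linarith
    obtain ⟨Nq, hNq⟩ := Metric.tendsto_atTop.1 hq (Metric.infDist q F / 3) hδ
    obtain ⟨n, hninf, hnge⟩ :=
      ((hfreq _ hδ).and_eventually (eventually_ge_atTop Nq)).exists
    have h1 : Metric.infDist q F ≤ Metric.infDist (x n) F + dist q (x n) :=
      Metric.infDist_le_infDist_add_dist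
    have h2 : dist q (x n) = dist (x n) q := dist_comm _ _
    have h3 := hNq n hnge
    linarith
end

section
/- Under the Scheme Hypotheses, assume additionally that all the maps T_1, …, T_m and I_1, …, I_m are continuous and that liminf_{n→∞} d(x_n, F) = 0, where d(x, F) = inf_{p∈F} ‖x − p‖. Then the explicit iterative sequence {x_n} is a Cauchy sequence in X. -/
open Filter Real Metric Finset

/-!
Fix a common fixed point `p`. The growth bounds on the gauges make each `Iᵢⁿ` and `Tᵢⁿ` move
points of `K` away from `p` by at most a factor `exp sₙ` plus an additive error `tₙ`, with
`s`, `t` summable, and convexity of balls transfers these bounds to the averaged iterates: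
`d(xₙ₊₁, p) ≤ exp aₙ · (d(xₙ, p) + bₙ)` with `a`, `b` summable. Iterating, from time `n` on the
sequence stays within `exp (∑_{j ≥ n} aⱼ) · (d(xₙ, p) + ∑_{j ≥ n} bⱼ)` of `p`. Picking `n` with
small tails and with `xₙ` close to `F` (possible since `liminf d(xₙ, F) = 0`) confines the whole
tail of the sequence to a small ball.
-/

lemma le_exp_mul_add_self {r a b : ℝ} (hr : 0 ≤ r) (ha : 0 ≤ a) (hb : 0 ≤ b) :
    r ≤ exp a * (r + b) :=
  calc r ≤ r + b := le_add_of_nonneg_right hb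
    _ ≤ exp a * (r + b) := le_mul_of_one_le_left (by positivity) (one_le_exp ha)

lemma le_exp_mul_add_trans {u v w a a' b b' : ℝ} (ha' : 0 ≤ a') (hb : 0 ≤ b)
    (hu : u ≤ exp a * (v + b)) (hv : v ≤ exp a' * (w + b')) :
    u ≤ exp (a' + a) * (w + (b' + b)) := by
  have hvb : v + b ≤ exp a' * (w + (b' + b)) := by
    nlinarith [mul_le_mul_of_nonneg_right (one_le_exp ha') hb]
  calc u ≤ exp a * (v + b) := hu
    _ ≤ exp a * (exp a' * (w + (b' + b))) := by gcongr
    _ = exp (a' + a) * (w + (b' + b)) := by rw [exp_add]; ring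

lemma le_exp_sum_mul_add_sum_of_succ_le {d a b : ℕ → ℝ} (ha : ∀ n, 0 ≤ a n)
    (hb : ∀ n, 0 ≤ b n) (hd : ∀ n, d (n + 1) ≤ exp (a n) * (d n + b n)) (n k : ℕ) :
    d (n + k) ≤ exp (∑ j ∈ range k, a (j + n)) * (d n + ∑ j ∈ range k, b (j + n)) := by
  induction k with
  | zero => simp
  | succ k ih =>
    rw [sum_range_succ, sum_range_succ, add_comm k n]
    exact le_exp_mul_add_trans (sum_nonneg fun j _ => ha _) (hb _) (hd (n + k)) ih

lemma sum_range_le_tsum_nat_add {f : ℕ → ℝ} (hf0 : ∀ n, 0 ≤ f n) (hf : Summable f)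
    (n k : ℕ) : ∑ j ∈ range k, f (j + n) ≤ ∑' j, f (j + n) :=
  ((summable_nat_add_iff n).mpr hf).sum_le_tsum _ fun _ _ => hf0 _

lemma le_exp_tsum_mul_add_tsum_of_succ_le {d a b : ℕ → ℝ} (hd0 : ∀ n, 0 ≤ d n)
    (ha0 : ∀ n, 0 ≤ a n) (hb0 : ∀ n, 0 ≤ b n) (ha : Summable a) (hb : Summable b)
    (hd : ∀ n, d (n + 1) ≤ exp (a n) * (d n + b n)) (n k : ℕ) :
    d (n + k) ≤ exp (∑' j, a (j + n)) * (d n + ∑' j, b (j + n)) := by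
  refine (le_exp_sum_mul_add_sum_of_succ_le ha0 hb0 hd n k).trans <|
    mul_le_mul (exp_le_exp.2 (sum_range_le_tsum_nat_add ha0 ha n k))
      (add_le_add_right (sum_range_le_tsum_nat_add hb0 hb n k) _)
      (add_nonneg (hd0 n) (sum_nonneg fun _ _ => hb0 _)) (exp_pos _).le

theorem cauchySeq_of_dist_succ_le_exp_mul_add {α : Type*} [PseudoMetricSpace α] {x : ℕ → α}
    {F : Set α} (hF : F.Nonempty) {a b : ℕ → ℝ} (ha0 : ∀ n, 0 ≤ a n) (hb0 : ∀ n, 0 ≤ b n)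
    (ha : Summable a) (hb : Summable b)
    (hx : ∀ p ∈ F, ∀ n, dist (x (n + 1)) p ≤ exp (a n) * (dist (x n) p + b n))
    (hliminf : liminf (fun n => infDist (x n) F) atTop = 0) : CauchySeq x := by
  have hfar : ∀ p ∈ F, ∀ n k,
      dist (x (n + k)) p ≤ exp (∑' j, a (j + n)) * (dist (x n) p + ∑' j, b (j + n)) :=
    fun p hp => le_exp_tsum_mul_add_tsum_of_succ_le (fun _ => dist_nonneg) ha0 hb0 ha hb (hx p hp)
  -- `liminf` in `ℝ` is `0` by convention for sequences not bounded above, hence this bound.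
  have hnear : ∀ δ > 0, ∃ᶠ n in atTop, infDist (x n) F < δ := by
    obtain ⟨p₀, hp₀⟩ := hF
    have hbdd : ∀ k, infDist (x k) F ≤
        exp (∑' j, a (j + 0)) * (dist (x 0) p₀ + ∑' j, b (j + 0)) := fun k => by
      have hk := hfar p₀ hp₀ 0 k
      rw [zero_add] at hk
      exact (infDist_le_dist_of_mem hp₀).trans hk
    exact fun δ hδ =>
      frequently_lt_of_liminf_lt (isCoboundedUnder_ge_of_le atTop hbdd) (hliminf ▸ hδ)
  rw [Metric.cauchySeq_iff']
  intro ε hε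
  set δ := ε / 7 with hδ
  have htails : ∀ᶠ n in atTop, ∑' j, a (j + n) ≤ 1 ∧ ∑' j, b (j + n) < δ :=
    ((tendsto_sum_nat_add a).eventually (ge_mem_nhds one_pos)).and
      ((tendsto_sum_nat_add b).eventually (gt_mem_nhds (by positivity)))
  obtain ⟨n, ⟨hna, hnb⟩, hn⟩ := (htails.and_frequently (hnear δ (by positivity))).exists
  obtain ⟨p, hp, hxp⟩ := (infDist_lt_iff hF).mp hn
  refine ⟨n, fun k hk => ?_⟩
  obtain ⟨l, rfl⟩ := Nat.exists_eq_add_of_le hk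
  have hfar' : dist (x (n + l)) p ≤ exp 1 * (δ + δ) :=
    (hfar p hp n l).trans <| mul_le_mul (exp_le_exp.2 hna) (by linarith)
      (add_nonneg dist_nonneg (tsum_nonneg fun _ => hb0 _)) (exp_pos 1).le
  have he : exp 1 < 3 := exp_one_lt_d9.trans (by norm_num)
  calc dist (x (n + l)) (x n) ≤ dist (x (n + l)) p + dist (x n) p := dist_triangle_right _ _ _
    _ < ε := by nlinarith

lemma Convex.smul_add_sum_smul_mem {E : Type*} [AddCommGroup E] [Module ℝ E] {s : Set E}
    (hs : Convex ℝ s) {m : ℕ} {w : Fin (m + 1) → ℝ} (hw0 : ∀ j, 0 ≤ w j) (hw1 : ∑ j, w j = 1)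
    {z₀ : E} {z : Fin m → E} (hz₀ : z₀ ∈ s) (hz : ∀ i, z i ∈ s) :
    w 0 • z₀ + ∑ i, w i.succ • z i ∈ s := by
  simpa [Fin.sum_univ_succ] using
    hs.sum_mem (t := univ) (z := Fin.cons z₀ z) (fun j _ => hw0 j) hw1
      fun j _ => Fin.cases hz₀ hz j

lemma le_add_mul_of_monotoneOn {φ : ℝ → ℝ} {M c r : ℝ} (hφ : MonotoneOn φ (Set.Ici 0))
    (hM : 0 ≤ M) (hφM : 0 ≤ φ M) (hc : 0 ≤ c) (hφc : ∀ ξ, M ≤ ξ → φ ξ ≤ c * ξ) (hr : 0 ≤ r) :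
    φ r ≤ φ M + c * r := by
  rcases le_total r M with hrM | hMr
  · have := hφ hr hM hrM
    nlinarith
  · linarith [hφc r hMr]

lemma le_exp_sum_mul_add_sum_of_le_add_mul {ι : Type*} [Fintype ι] {φ : ι → ℝ → ℝ}
    {M c μ l : ι → ℝ} (hφ : ∀ i, MonotoneOn (φ i) (Set.Ici 0)) (hM : ∀ i, 0 ≤ M i)
    (hφM : ∀ i, 0 ≤ φ i (M i)) (hc : ∀ i, 0 ≤ c i) (hφc : ∀ i ξ, M i ≤ ξ → φ i ξ ≤ c i * ξ)
    (hμ : ∀ i, 0 ≤ μ i) (hl : ∀ i, 0 ≤ l i) {r u : ℝ} (hr : 0 ≤ r) (i : ι)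
    (hu : u ≤ r + μ i * φ i r + l i) :
    u ≤ exp (∑ j, μ j * c j) * (r + ∑ j, (μ j * φ j (M j) + l j)) := by
  have hs : μ i * c i ≤ ∑ j, μ j * c j :=
    single_le_sum (f := fun j => μ j * c j) (fun j _ => mul_nonneg (hμ j) (hc j)) (mem_univ i)
  have ht : μ i * φ i (M i) + l i ≤ ∑ j, (μ j * φ j (M j) + l j) :=
    single_le_sum (f := fun j => μ j * φ j (M j) + l j)
      (fun j _ => add_nonneg (mul_nonneg (hμ j) (hφM j)) (hl j)) (mem_univ i)
  have hφr := mul_le_mul_of_nonneg_left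
    (le_add_mul_of_monotoneOn (hφ i) (hM i) (hφM i) (hc i) (hφc i) hr) (hμ i)
  have hs0 := (mul_nonneg (hμ i) (hc i)).trans hs
  have ht0 := (add_nonneg (mul_nonneg (hμ i) (hφM i)) (hl i)).trans ht
  calc u ≤ (1 + ∑ j, μ j * c j) * (r + ∑ j, (μ j * φ j (M j) + l j)) := by nlinarith
    _ ≤ exp (∑ j, μ j * c j) * (r + ∑ j, (μ j * φ j (M j) + l j)) := by
      gcongr
      linarith [add_one_le_exp (∑ j, μ j * c j)]

lemma Convex.forall_mem_of_iteration {E : Type*} [AddCommGroup E] [Module ℝ E] {K : Set E}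
    (hK : Convex ℝ K) {m : ℕ} {T I : Fin m → E → E} (hTK : ∀ i, Set.MapsTo (T i) K K)
    (hIK : ∀ i, Set.MapsTo (I i) K K) {α β : Fin (m + 1) → ℕ → ℝ} (hα0 : ∀ j n, 0 ≤ α j n)
    (hβ0 : ∀ j n, 0 ≤ β j n) (hα1 : ∀ n, ∑ j, α j n = 1) (hβ1 : ∀ n, ∑ j, β j n = 1)
    {x y : ℕ → E} (hx0 : x 0 ∈ K)
    (hy : ∀ n, y n = β 0 n • x n + ∑ i : Fin m, β i.succ n • (I i)^[n] (x n))
    (hx : ∀ n, x (n + 1) = α 0 n • x n + ∑ i : Fin m, α i.succ n • (T i)^[n] (y n)) (n : ℕ) :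
    x n ∈ K ∧ y n ∈ K := by
  have hyK : ∀ n, x n ∈ K → y n ∈ K := fun n hxn => by
    rw [hy n]
    exact hK.smul_add_sum_smul_mem (hβ0 · n) (hβ1 n) hxn fun i => (hIK i).iterate n hxn
  have hxK : x n ∈ K := by
    induction n with
    | zero => exact hx0
    | succ n ih =>
      rw [hx n]
      exact hK.smul_add_sum_smul_mem (hα0 · n) (hα1 n) ih
        fun i => (hTK i).iterate n (hyK n ih)
  exact ⟨hxK, hyK n hxK⟩

lemma dist_iterate_le_exp_sum_mul_add_sum {ι X : Type*} [Fintype ι] [SeminormedAddCommGroup X]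
    {K : Set X} {f g : ι → X → X} {p : X} (hp : p ∈ K) (hfp : ∀ i, f i p = p)
    (hgp : ∀ i, g i p = p) {φ : ι → ℝ → ℝ} {M c : ι → ℝ} {μ l : ι → ℕ → ℝ}
    (hφ : ∀ i, MonotoneOn (φ i) (Set.Ici 0)) (hφ0 : ∀ i t, 0 ≤ t → 0 ≤ φ i t)
    (hM : ∀ i, 0 ≤ M i) (hc : ∀ i, 0 ≤ c i) (hφc : ∀ i ξ, M i ≤ ξ → φ i ξ ≤ c i * ξ)
    (hμ : ∀ i n, 0 ≤ μ i n) (hl : ∀ i n, 0 ≤ l i n)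
    (hf : ∀ i, ∀ n, 1 ≤ n → ∀ z ∈ K, ∀ w ∈ K, ‖(f i)^[n] z - (f i)^[n] w‖ ≤
      ‖(g i)^[n] z - (g i)^[n] w‖ + μ i n * φ i ‖(g i)^[n] z - (g i)^[n] w‖ + l i n)
    (i : ι) (n : ℕ) {z : X} (hz : z ∈ K) :
    dist ((f i)^[n] z) p ≤
      exp (∑ j, μ j n * c j) * (dist ((g i)^[n] z) p + ∑ j, (μ j n * φ j (M j) + l j n)) := by
  rcases Nat.eq_zero_or_pos n with rfl | hn
  · exact le_exp_mul_add_self dist_nonneg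
      (sum_nonneg fun j _ => mul_nonneg (hμ j 0) (hc j))
      (sum_nonneg fun j _ => add_nonneg (mul_nonneg (hμ j 0) (hφ0 j _ (hM j))) (hl j 0))
  have h := hf i n hn z hz p hp
  simp only [Function.iterate_fixed (hfp i), Function.iterate_fixed (hgp i),
    ← dist_eq_norm] at h
  exact le_exp_sum_mul_add_sum_of_le_add_mul (φ := φ) (μ := (μ · n)) (l := (l · n)) hφ hM
    (fun j => hφ0 j _ (hM j)) hc hφc (hμ · n) (hl · n) dist_nonneg i h

lemma dist_averaged_iterate_le {E : Type*} [SeminormedAddCommGroup E] [NormedSpace ℝ E]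
    {K : Set E} {m : ℕ} {A B : Fin m → E → E} {α β : Fin (m + 1) → ℝ} (hα0 : ∀ j, 0 ≤ α j)
    (hβ0 : ∀ j, 0 ≤ β j) (hα1 : ∑ j, α j = 1) (hβ1 : ∑ j, β j = 1) {p x₀ y₀ : E}
    {s t s' t' : ℝ} (hs : 0 ≤ s) (ht : 0 ≤ t) (hs' : 0 ≤ s') (ht' : 0 ≤ t')
    (hA : ∀ i, ∀ z ∈ K, dist (A i z) p ≤ exp s * (dist z p + t))
    (hB : ∀ i, ∀ z ∈ K, dist (B i z) p ≤ exp s' * (dist (A i z) p + t'))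
    (hx₀ : x₀ ∈ K) (hy₀K : y₀ ∈ K) (hy₀ : y₀ = β 0 • x₀ + ∑ i, β i.succ • A i x₀) :
    dist (α 0 • x₀ + ∑ i, α i.succ • B i y₀) p ≤
      exp (s + s + s') * (dist x₀ p + (t + t + t')) := by
  have hy₀p : dist y₀ p ≤ exp s * (dist x₀ p + t) := by
    rw [hy₀, ← mem_closedBall]
    exact (convex_closedBall p _).smul_add_sum_smul_mem hβ0 hβ1
      (mem_closedBall.2 (le_exp_mul_add_self dist_nonneg hs ht))
      fun i => mem_closedBall.2 (hA i x₀ hx₀)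
  rw [← mem_closedBall]
  refine (convex_closedBall p _).smul_add_sum_smul_mem hα0 hα1
    (mem_closedBall.2 (le_exp_mul_add_self dist_nonneg (by positivity) (by positivity)))
    fun i => mem_closedBall.2 ?_
  exact le_exp_mul_add_trans (by positivity) ht' (hB i y₀ hy₀K)
    (le_exp_mul_add_trans hs ht (hA i y₀ hy₀K) hy₀p)

theorem stmt6_general
    {X : Type*} [NormedAddCommGroup X] [NormedSpace ℝ X]
    {K : Set X} (hKco : Convex ℝ K)
    {m : ℕ}
    (T I : Fin m → X → X)
    (hTK : ∀ i, Set.MapsTo (T i) K K) (hIK : ∀ i, Set.MapsTo (I i) K K)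
    (μ lam tμ tlam : Fin m → ℕ → ℝ)
    (hμ0 : ∀ i n, 0 ≤ μ i n) (hlam0 : ∀ i n, 0 ≤ lam i n)
    (htμ0 : ∀ i n, 0 ≤ tμ i n) (htlam0 : ∀ i n, 0 ≤ tlam i n)
    (hμsum : ∀ i, Summable (μ i)) (hlamsum : ∀ i, Summable (lam i))
    (htμsum : ∀ i, Summable (tμ i)) (htlamsum : ∀ i, Summable (tlam i))
    (φ ψ : Fin m → ℝ → ℝ)
    (hφmono : ∀ i, StrictMonoOn (φ i) (Set.Ici 0))
    (hφpos : ∀ i t, 0 ≤ t → 0 ≤ φ i t)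
    (hψmono : ∀ i, StrictMonoOn (ψ i) (Set.Ici 0))
    (hψpos : ∀ i t, 0 ≤ t → 0 ≤ ψ i t)
    (hI : ∀ i, ∀ n, 1 ≤ n → ∀ x ∈ K, ∀ y ∈ K,
      ‖(I i)^[n] x - (I i)^[n] y‖ ≤ ‖x - y‖ + tμ i n * ψ i ‖x - y‖ + tlam i n)
    (hT : ∀ i, ∀ n, 1 ≤ n → ∀ x ∈ K, ∀ y ∈ K,
      ‖(T i)^[n] x - (T i)^[n] y‖ ≤
        ‖(I i)^[n] x - (I i)^[n] y‖ + μ i n * φ i ‖(I i)^[n] x - (I i)^[n] y‖ + lam i n)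
    (F : Set X)
    (hFdef : ∀ p, p ∈ F ↔ p ∈ K ∧ ∀ i, T i p = p ∧ I i p = p)
    (hFne : F.Nonempty)
    (M Ms N Ns : Fin m → ℝ)
    (hM : ∀ i, 0 < M i) (hMs : ∀ i, 0 < Ms i) (hN : ∀ i, 0 < N i) (hNs : ∀ i, 0 < Ns i)
    (hφbound : ∀ i ξ, M i ≤ ξ → φ i ξ ≤ Ms i * ξ)
    (hψbound : ∀ i ζ, N i ≤ ζ → ψ i ζ ≤ Ns i * ζ)
    (a b : Fin (m + 1) → ℕ → ℝ)
    (ha : ∀ j n, a j n ∈ Set.Ioo (0 : ℝ) 1) (hb : ∀ j n, b j n ∈ Set.Ioo (0 : ℝ) 1)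
    (hasum : ∀ n, ∑ j, a j n = 1) (hbsum : ∀ n, ∑ j, b j n = 1)
    (x y : ℕ → X) (hx0 : x 0 ∈ K)
    (hy : ∀ n, y n = b 0 n • x n + ∑ i : Fin m, b i.succ n • (I i)^[n] (x n))
    (hxrec : ∀ n, x (n + 1) = a 0 n • x n + ∑ i : Fin m, a i.succ n • (T i)^[n] (y n))
    (hliminf : Filter.liminf (fun n => Metric.infDist (x n) F) atTop = 0)
    : CauchySeq x := by
  have hK := hKco.forall_mem_of_iteration hTK hIK (fun j n => (ha j n).1.le)
    (fun j n => (hb j n).1.le) hasum hbsum hx0 hy hxrec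
  set sI : ℕ → ℝ := fun n => ∑ i, tμ i n * Ns i
  set tI : ℕ → ℝ := fun n => ∑ i, (tμ i n * ψ i (N i) + tlam i n)
  set sT : ℕ → ℝ := fun n => ∑ i, μ i n * Ms i
  set tT : ℕ → ℝ := fun n => ∑ i, (μ i n * φ i (M i) + lam i n)
  have hsI0 : ∀ n, 0 ≤ sI n := fun n => sum_nonneg fun i _ => mul_nonneg (htμ0 i n) (hNs i).le
  have htI0 : ∀ n, 0 ≤ tI n := fun n => sum_nonneg fun i _ =>
    add_nonneg (mul_nonneg (htμ0 i n) (hψpos i _ (hN i).le)) (htlam0 i n)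
  have hsT0 : ∀ n, 0 ≤ sT n := fun n => sum_nonneg fun i _ => mul_nonneg (hμ0 i n) (hMs i).le
  have htT0 : ∀ n, 0 ≤ tT n := fun n => sum_nonneg fun i _ =>
    add_nonneg (mul_nonneg (hμ0 i n) (hφpos i _ (hM i).le)) (hlam0 i n)
  have hsI : Summable sI := summable_sum fun i _ => (htμsum i).mul_right _
  have htI : Summable tI := summable_sum fun i _ => ((htμsum i).mul_right _).add (htlamsum i)
  have hsT : Summable sT := summable_sum fun i _ => (hμsum i).mul_right _
  have htT : Summable tT := summable_sum fun i _ => ((hμsum i).mul_right _).add (hlamsum i)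
  refine cauchySeq_of_dist_succ_le_exp_mul_add hFne
    (fun n => add_nonneg (add_nonneg (hsI0 n) (hsI0 n)) (hsT0 n))
    (fun n => add_nonneg (add_nonneg (htI0 n) (htI0 n)) (htT0 n))
    ((hsI.add hsI).add hsT) ((htI.add htI).add htT) (fun p hp n => ?_) hliminf
  obtain ⟨hpK, hfix⟩ := (hFdef p).1 hp
  rw [hxrec n]
  refine dist_averaged_iterate_le (ha · n |>.1.le) (hb · n |>.1.le) (hasum n) (hbsum n)
    (hsI0 n) (htI0 n) (hsT0 n) (htT0 n) (fun i z hz => ?_) (fun i z hz => ?_)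
    (hK n).1 (hK n).2 (hy n)
  -- `Iᵢ` is total asymptotically nonexpansive relative to `id`.
  · simpa using dist_iterate_le_exp_sum_mul_add_sum (g := fun _ => id) hpK (hfix · |>.2)
      (fun _ => rfl) (fun i => (hψmono i).monotoneOn) hψpos (hN · |>.le) (hNs · |>.le)
      hψbound htμ0 htlam0 (by simpa using hI) i n hz
  · exact dist_iterate_le_exp_sum_mul_add_sum hpK (hfix · |>.1) (hfix · |>.2)
      (fun i => (hφmono i).monotoneOn) hφpos (hM · |>.le) (hMs · |>.le) hφbound hμ0 hlam0 hT
      i n hz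

/-- under the scheme hypotheses with all maps continuous and
`liminf d(x n, F) = 0`, the iterative sequence `x` is Cauchy. -/
theorem stmt6
    {X : Type*} [NormedAddCommGroup X] [NormedSpace ℝ X] [CompleteSpace X]
    [UniformConvexSpace X]
    {K : Set X} (hKne : K.Nonempty) (hKcl : IsClosed K) (hKco : Convex ℝ K)
    {m : ℕ} (hm : 1 ≤ m)
    (T I : Fin m → X → X)
    (hTK : ∀ i, Set.MapsTo (T i) K K) (hIK : ∀ i, Set.MapsTo (I i) K K)
    (hTcont : ∀ i, ContinuousOn (T i) K) (hIcont : ∀ i, ContinuousOn (I i) K)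
    (μ lam tμ tlam : Fin m → ℕ → ℝ)
    (hμ0 : ∀ i n, 0 ≤ μ i n) (hlam0 : ∀ i n, 0 ≤ lam i n)
    (htμ0 : ∀ i n, 0 ≤ tμ i n) (htlam0 : ∀ i n, 0 ≤ tlam i n)
    (hμlim : ∀ i, Tendsto (μ i) atTop (nhds 0)) (hlamlim : ∀ i, Tendsto (lam i) atTop (nhds 0))
    (htμlim : ∀ i, Tendsto (tμ i) atTop (nhds 0))
    (htlamlim : ∀ i, Tendsto (tlam i) atTop (nhds 0))
    (hμsum : ∀ i, Summable (μ i)) (hlamsum : ∀ i, Summable (lam i))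
    (htμsum : ∀ i, Summable (tμ i)) (htlamsum : ∀ i, Summable (tlam i))
    (φ ψ : Fin m → ℝ → ℝ)
    (hφmono : ∀ i, StrictMonoOn (φ i) (Set.Ici 0))
    (hφcont : ∀ i, ContinuousOn (φ i) (Set.Ici 0))
    (hφ0 : ∀ i, φ i 0 = 0) (hφpos : ∀ i t, 0 ≤ t → 0 ≤ φ i t)
    (hψmono : ∀ i, StrictMonoOn (ψ i) (Set.Ici 0))
    (hψcont : ∀ i, ContinuousOn (ψ i) (Set.Ici 0))
    (hψ0 : ∀ i, ψ i 0 = 0) (hψpos : ∀ i t, 0 ≤ t → 0 ≤ ψ i t)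
    (hI : ∀ i, ∀ n, 1 ≤ n → ∀ x ∈ K, ∀ y ∈ K,
      ‖(I i)^[n] x - (I i)^[n] y‖ ≤ ‖x - y‖ + tμ i n * ψ i ‖x - y‖ + tlam i n)
    (hT : ∀ i, ∀ n, 1 ≤ n → ∀ x ∈ K, ∀ y ∈ K,
      ‖(T i)^[n] x - (T i)^[n] y‖ ≤
        ‖(I i)^[n] x - (I i)^[n] y‖ + μ i n * φ i ‖(I i)^[n] x - (I i)^[n] y‖ + lam i n)
    (F : Set X)
    (hFdef : ∀ p, p ∈ F ↔ p ∈ K ∧ ∀ i, T i p = p ∧ I i p = p)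
    (hFne : F.Nonempty)
    (M Ms N Ns : Fin m → ℝ)
    (hM : ∀ i, 0 < M i) (hMs : ∀ i, 0 < Ms i) (hN : ∀ i, 0 < N i) (hNs : ∀ i, 0 < Ns i)
    (hφbound : ∀ i ξ, M i ≤ ξ → φ i ξ ≤ Ms i * ξ)
    (hψbound : ∀ i ζ, N i ≤ ζ → ψ i ζ ≤ Ns i * ζ)
    (a b : Fin (m + 1) → ℕ → ℝ)
    (ha : ∀ j n, a j n ∈ Set.Ioo (0 : ℝ) 1) (hb : ∀ j n, b j n ∈ Set.Ioo (0 : ℝ) 1)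
    (hasum : ∀ n, ∑ j, a j n = 1) (hbsum : ∀ n, ∑ j, b j n = 1)
    (x y : ℕ → X) (hx0 : x 0 ∈ K)
    (hy : ∀ n, y n = b 0 n • x n + ∑ i : Fin m, b i.succ n • (I i)^[n] (x n))
    (hxrec : ∀ n, x (n + 1) = a 0 n • x n + ∑ i : Fin m, a i.succ n • (T i)^[n] (y n))
    (hliminf : Filter.liminf (fun n => Metric.infDist (x n) F) atTop = 0)
    : CauchySeq x :=
  stmt6_general hKco T I hTK hIK μ lam tμ tlam hμ0 hlam0 htμ0 htlam0 hμsum hlamsum htμsum htlamsum φ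
    ψ hφmono hφpos hψmono hψpos hI hT F hFdef hFne M Ms N Ns hM hMs hN hNs hφbound hψbound a b ha hb
    hasum hbsum x y hx0 hy hxrec hliminf
end

section
/- Under the Bounded-Coefficient Scheme Hypotheses, assume additionally that all the maps T_1, …, T_m and I_1, …, I_m are continuous. Then for each i = 1, …, m, lim_{n→∞} ‖x_n − T_iⁿ y_n‖ = 0. -/
/-!
Fix a common fixed point `p`. The growth conditions on the gauges turn the two total asymptotic
conditions into affine bounds `‖Iᵢⁿ z - p‖ ≤ (1 + sₙ) ‖z - p‖ + rₙ` (and this bound applied twice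
for `Tᵢⁿ`) with summable `s, r`, so `dₙ = ‖xₙ - p‖` satisfies `dₙ₊₁ ≤ (1 + s'ₙ) dₙ + r'ₙ` and
converges to some `c`. Now `xₙ₊₁` is a convex combination of `xₙ, T₁ⁿ yₙ, …, Tₘⁿ yₙ` with weights
bounded away from `0` and `1`; these points are asymptotically within `c` of `p` while
`‖xₙ₊₁ - p‖ → c`, so uniform convexity (Schu's lemma) forces them to coalesce.
-/

open Filter Topology

section QuasiFejer

open Finset

theorem exists_tendsto_of_le_add_summable {d t : ℕ → ℝ} (hd : BddBelow (Set.range d))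
    (ht0 : ∀ n, 0 ≤ t n) (ht : Summable t) (h : ∀ n, d (n + 1) ≤ d n + t n) :
    ∃ c, Tendsto d atTop (𝓝 c) := by
  set e : ℕ → ℝ := fun n => d n - ∑ k ∈ range n, t k
  have he : Antitone e := antitone_nat_of_succ_le fun n => by
    simp only [e, sum_range_succ]
    linarith [h n]
  obtain ⟨b, hb⟩ := hd
  have hbdd : BddBelow (Set.range e) := by
    refine ⟨b - ∑' k, t k, ?_⟩
    rintro _ ⟨n, rfl⟩
    linarith [hb ⟨n, rfl⟩, ht.sum_le_tsum (range n) fun k _ => ht0 k]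
  refine ⟨(⨅ n, e n) + ∑' k, t k, ?_⟩
  simpa [e] using (tendsto_atTop_ciInf he hbdd).add ht.hasSum.tendsto_sum_nat

theorem exists_tendsto_of_le_one_add_mul_add {d s r : ℕ → ℝ} (hd : ∀ n, 0 ≤ d n)
    (hs0 : ∀ n, 0 ≤ s n) (hr0 : ∀ n, 0 ≤ r n) (hs : Summable s) (hr : Summable r)
    (h : ∀ n, d (n + 1) ≤ (1 + s n) * d n + r n) : ∃ c, Tendsto d atTop (𝓝 c) := by
  have hgrowth : ∀ n, d n ≤ (d 0 + ∑ k ∈ range n, r k) * Real.exp (∑ k ∈ range n, s k) := by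
    intro n
    induction n with
    | zero => simp
    | succ n ih =>
      have h1 : 1 + s n ≤ Real.exp (s n) := by linarith [Real.add_one_le_exp (s n)]
      have h2 : 1 ≤ Real.exp (∑ k ∈ range n, s k) :=
        Real.one_le_exp (sum_nonneg fun k _ => hs0 k)
      have h3 : 1 ≤ Real.exp (s n) := Real.one_le_exp (hs0 n)
      rw [sum_range_succ, sum_range_succ, Real.exp_add]
      calc d (n + 1) ≤ (1 + s n) * d n + r n := h n
        _ ≤ Real.exp (s n) * ((d 0 + ∑ k ∈ range n, r k) * Real.exp (∑ k ∈ range n, s k)) +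
            r n * (Real.exp (∑ k ∈ range n, s k) * Real.exp (s n)) :=
          add_le_add (mul_le_mul h1 ih (hd n) (Real.exp_pos _).le)
            (le_mul_of_one_le_right (hr0 n) (one_le_mul_of_one_le_of_one_le h2 h3))
        _ = _ := by ring
  set B := (d 0 + ∑' k, r k) * Real.exp (∑' k, s k)
  have hB : ∀ n, d n ≤ B := fun n => (hgrowth n).trans <|
    mul_le_mul (by linarith [hr.sum_le_tsum (range n) fun k _ => hr0 k])
      (Real.exp_le_exp.2 (hs.sum_le_tsum _ fun k _ => hs0 k)) (Real.exp_pos _).le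
      (add_nonneg (hd 0) (tsum_nonneg hr0))
  refine exists_tendsto_of_le_add_summable ⟨0, ?_⟩ (fun n => add_nonneg
    (mul_nonneg (hs0 n) ((hd n).trans (hB n))) (hr0 n)) ((hs.mul_right B).add hr) fun n => ?_
  · rintro _ ⟨n, rfl⟩
    exact hd n
  · nlinarith [h n, hB n, hs0 n]

end QuasiFejer

def affineMajorant (s r : ℕ → ℝ) (n : ℕ) (t : ℝ) : ℝ := (1 + s n) * t + r n

section AffineMajorant

variable {s r : ℕ → ℝ} {n : ℕ}

theorem le_affineMajorant (hs : 0 ≤ s n) (hr : 0 ≤ r n) {t : ℝ} (ht : 0 ≤ t) :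
    t ≤ affineMajorant s r n t := by
  unfold affineMajorant
  nlinarith

theorem affineMajorant_mono (hs : 0 ≤ s n) : Monotone (affineMajorant s r n) :=
  fun _ _ h => by unfold affineMajorant; gcongr

theorem affineMajorant_three_le {C t : ℝ} (hs : 0 ≤ s n) (hsC : s n ≤ C) (hr : 0 ≤ r n)
    (ht : 0 ≤ t) :
    affineMajorant s r n (affineMajorant s r n (affineMajorant s r n t)) ≤
      (1 + 3 * (1 + C) ^ 2 * s n) * t + 3 * (1 + C) ^ 2 * r n := by
  have hC : 0 ≤ C := hs.trans hsC
  have h2 : (1 + s n) ^ 2 + (1 + s n) + 1 ≤ 3 * (1 + C) ^ 2 := by nlinarith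
  have h1 : (1 + s n) ^ 3 ≤ 1 + 3 * (1 + C) ^ 2 * s n := by
    nlinarith [mul_le_mul_of_nonneg_left h2 hs]
  calc affineMajorant s r n (affineMajorant s r n (affineMajorant s r n t))
      = (1 + s n) ^ 3 * t + ((1 + s n) ^ 2 + (1 + s n) + 1) * r n := by
        unfold affineMajorant; ring
    _ ≤ _ := by gcongr

theorem Filter.Tendsto.affineMajorant {f : ℕ → ℝ} {c : ℝ} (hf : Tendsto f atTop (𝓝 c))
    (hs : Tendsto s atTop (𝓝 0)) (hr : Tendsto r atTop (𝓝 0)) :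
    Tendsto (fun n => affineMajorant s r n (f n)) atTop (𝓝 c) := by
  simpa [_root_.affineMajorant] using (((tendsto_const_nhds (x := (1 : ℝ))).add hs).mul hf).add hr

end AffineMajorant

theorem le_one_add_mul_add_of_le_add_mul {φ : ℝ → ℝ} {M M' μ lam t t' : ℝ}
    (hφ : MonotoneOn φ (Set.Ici 0)) (hM : 0 ≤ M) (hM' : 0 ≤ M') (hφM : 0 ≤ φ M)
    (hφle : ∀ ξ, M ≤ ξ → φ ξ ≤ M' * ξ) (hμ : 0 ≤ μ) (ht : 0 ≤ t)
    (h : t' ≤ t + μ * φ t + lam) : t' ≤ (1 + μ * M') * t + (μ * φ M + lam) := by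
  have hφt : φ t ≤ φ M + M' * t := by
    rcases le_total t M with htM | hMt
    · linarith [hφ ht hM htM, mul_nonneg hM' ht]
    · linarith [hφle t hMt]
  nlinarith [mul_le_mul_of_nonneg_left hφt hμ]

section AffineBounds

open Finset

variable {E : Type*} [NormedAddCommGroup E]

theorem exists_summable_affineMajorant {ι : Type*} [Fintype ι] {K : Set E} {p : E}
    (hpK : p ∈ K) {T I : ι → E → E} (hTp : ∀ i, T i p = p) (hIp : ∀ i, I i p = p)
    {μ lam tμ tlam : ι → ℕ → ℝ}
    (hμ0 : ∀ i n, 0 ≤ μ i n) (hlam0 : ∀ i n, 0 ≤ lam i n)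
    (htμ0 : ∀ i n, 0 ≤ tμ i n) (htlam0 : ∀ i n, 0 ≤ tlam i n)
    (hμ : ∀ i, Summable (μ i)) (hlam : ∀ i, Summable (lam i))
    (htμ : ∀ i, Summable (tμ i)) (htlam : ∀ i, Summable (tlam i))
    {φ ψ : ι → ℝ → ℝ} (hφ : ∀ i, MonotoneOn (φ i) (Set.Ici 0))
    (hψ : ∀ i, MonotoneOn (ψ i) (Set.Ici 0)) {M Ms N Ns : ι → ℝ}
    (hM : ∀ i, 0 ≤ M i) (hMs : ∀ i, 0 ≤ Ms i) (hN : ∀ i, 0 ≤ N i) (hNs : ∀ i, 0 ≤ Ns i)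
    (hφM : ∀ i, 0 ≤ φ i (M i)) (hψN : ∀ i, 0 ≤ ψ i (N i))
    (hφle : ∀ i ξ, M i ≤ ξ → φ i ξ ≤ Ms i * ξ) (hψle : ∀ i ζ, N i ≤ ζ → ψ i ζ ≤ Ns i * ζ)
    (hI : ∀ i, ∀ n, 1 ≤ n → ∀ x ∈ K, ∀ y ∈ K,
      ‖(I i)^[n] x - (I i)^[n] y‖ ≤ ‖x - y‖ + tμ i n * ψ i ‖x - y‖ + tlam i n)
    (hT : ∀ i, ∀ n, 1 ≤ n → ∀ x ∈ K, ∀ y ∈ K,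
      ‖(T i)^[n] x - (T i)^[n] y‖ ≤
        ‖(I i)^[n] x - (I i)^[n] y‖ + μ i n * φ i ‖(I i)^[n] x - (I i)^[n] y‖ + lam i n) :
    ∃ s r : ℕ → ℝ, (∀ n, 0 ≤ s n) ∧ (∀ n, 0 ≤ r n) ∧ Summable s ∧ Summable r ∧
      ∀ i n, ∀ z ∈ K, ‖(I i)^[n] z - p‖ ≤ affineMajorant s r n ‖z - p‖ ∧
        ‖(T i)^[n] z - p‖ ≤ affineMajorant s r n (affineMajorant s r n ‖z - p‖) := by
  set si : ι → ℕ → ℝ := fun i n => tμ i n * Ns i + μ i n * Ms i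
  set ri : ι → ℕ → ℝ := fun i n => tμ i n * ψ i (N i) + tlam i n + (μ i n * φ i (M i) + lam i n)
  have hsi0 : ∀ i n, 0 ≤ si i n := fun i n =>
    add_nonneg (mul_nonneg (htμ0 i n) (hNs i)) (mul_nonneg (hμ0 i n) (hMs i))
  have hri0 : ∀ i n, 0 ≤ ri i n := fun i n =>
    add_nonneg (add_nonneg (mul_nonneg (htμ0 i n) (hψN i)) (htlam0 i n))
      (add_nonneg (mul_nonneg (hμ0 i n) (hφM i)) (hlam0 i n))
  set s : ℕ → ℝ := fun n => ∑ i, si i n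
  set r : ℕ → ℝ := fun n => ∑ i, ri i n
  have hs0 : ∀ n, 0 ≤ s n := fun n => sum_nonneg fun i _ => hsi0 i n
  have hr0 : ∀ n, 0 ≤ r n := fun n => sum_nonneg fun i _ => hri0 i n
  refine ⟨s, r, hs0, hr0, summable_sum fun i _ => ((htμ i).mul_right _).add ((hμ i).mul_right _),
    summable_sum fun i _ => (((htμ i).mul_right _).add (htlam i)).add
      (((hμ i).mul_right _).add (hlam i)), fun i n z hz => ?_⟩
  have hA := affineMajorant_mono (r := r) (hs0 n)
  have hle : ∀ {t}, 0 ≤ t → t ≤ affineMajorant s r n t := le_affineMajorant (hs0 n) (hr0 n)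
  rcases Nat.eq_zero_or_pos n with rfl | hn
  · exact ⟨hle (norm_nonneg _), (hle (norm_nonneg _)).trans (hA (hle (norm_nonneg _)))⟩
  have hsi : si i n ≤ s n := single_le_sum (fun j _ => hsi0 j n) (mem_univ i)
  have hri : ri i n ≤ r n := single_le_sum (fun j _ => hri0 j n) (mem_univ i)
  have hIz : ‖(I i)^[n] z - p‖ ≤ affineMajorant s r n ‖z - p‖ := by
    have h := hI i n hn z hz p hpK
    rw [Function.iterate_fixed (hIp i)] at h
    refine (le_one_add_mul_add_of_le_add_mul (hψ i) (hN i) (hNs i) (hψN i) (hψle i)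
      (htμ0 i n) (norm_nonneg _) h).trans ?_
    unfold affineMajorant
    gcongr <;> linarith [mul_nonneg (hμ0 i n) (hMs i), mul_nonneg (hμ0 i n) (hφM i), hlam0 i n]
  refine ⟨hIz, (hA hIz).trans' ?_⟩
  have h := hT i n hn z hz p hpK
  rw [Function.iterate_fixed (hIp i), Function.iterate_fixed (hTp i)] at h
  refine (le_one_add_mul_add_of_le_add_mul (hφ i) (hM i) (hMs i) (hφM i) (hφle i)
    (hμ0 i n) (norm_nonneg _) h).trans ?_
  unfold affineMajorant
  gcongr <;> linarith [mul_nonneg (htμ0 i n) (hNs i), mul_nonneg (htμ0 i n) (hψN i), htlam0 i n]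

end AffineBounds

section UniformConvex

variable {E : Type*} [NormedAddCommGroup E] [NormedSpace ℝ E]

theorem norm_smul_add_one_sub_smul_le {u v : E} {R δ κ L : ℝ} (hu : ‖u‖ ≤ R) (hv : ‖v‖ ≤ R)
    (huv : ‖u + v‖ ≤ (2 - δ) * R) (hδ : 0 ≤ δ) (hκ : 0 ≤ κ) (hκL : κ ≤ L) (hκL' : κ ≤ 1 - L) :
    ‖L • u + (1 - L) • v‖ ≤ (1 - κ * δ) * R := by
  wlog hL : L ≤ 1 - L generalizing u v L
  · have := this hv hu (by rwa [add_comm]) hκL' (by linarith) (by linarith)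
    rwa [sub_sub_cancel, add_comm] at this
  have hR : 0 ≤ R := (norm_nonneg u).trans hu
  have hL0 : 0 ≤ L := hκ.trans hκL
  calc ‖L • u + (1 - L) • v‖ = ‖L • (u + v) + (1 - 2 * L) • v‖ := by congr 1; module
    _ ≤ L * ‖u + v‖ + (1 - 2 * L) * ‖v‖ := by
      refine (norm_add_le _ _).trans_eq ?_
      rw [norm_smul_of_nonneg hL0, norm_smul_of_nonneg (by linarith)]
    _ ≤ L * ((2 - δ) * R) + (1 - 2 * L) * R := by gcongr; linarith
    _ ≤ (1 - κ * δ) * R := by nlinarith [mul_nonneg hδ hR]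

variable [UniformConvexSpace E]

theorem exists_forall_norm_add_le_two_sub_mul {ε : ℝ} (hε : 0 < ε) :
    ∃ δ, 0 < δ ∧ ∀ ⦃R : ℝ⦄ ⦃u v : E⦄, ‖u‖ ≤ R → ‖v‖ ≤ R → ε * R ≤ ‖u - v‖ →
      ‖u + v‖ ≤ (2 - δ) * R := by
  obtain ⟨δ, hδ, h⟩ := exists_forall_closed_ball_dist_add_le_two_sub E hε
  refine ⟨δ, hδ, fun R u v hu hv huv => ?_⟩
  obtain hR | hR := ((norm_nonneg u).trans hu).eq_or_lt
  · simp [← hR, norm_le_zero_iff.1 (hR ▸ hu), norm_le_zero_iff.1 (hR ▸ hv)]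
  have hR' : 0 ≤ R⁻¹ := inv_nonneg.2 hR.le
  have key := h (x := R⁻¹ • u) (y := R⁻¹ • v)
  simp only [← smul_add, ← smul_sub, norm_smul_of_nonneg hR', inv_mul_le_iff₀ hR,
    le_inv_mul_iff₀ hR, mul_one] at key
  linarith [key hu hv (by linarith)]

theorem tendsto_norm_sub_of_tendsto_norm_smul_add {κ c : ℝ} (hκ : 0 < κ) {L D : ℕ → ℝ}
    (hL : ∀ n, κ ≤ L n ∧ κ ≤ 1 - L n) {u v : ℕ → E} (hu : ∀ n, ‖u n‖ ≤ D n)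
    (hv : ∀ n, ‖v n‖ ≤ D n) (hD : Tendsto D atTop (𝓝 c))
    (hlim : Tendsto (fun n => ‖L n • u n + (1 - L n) • v n‖) atTop (𝓝 c)) :
    Tendsto (fun n => ‖u n - v n‖) atTop (𝓝 0) := by
  refine tendsto_order.2 ⟨fun ε hε => .of_forall fun n => hε.trans_le (norm_nonneg _),
    fun ε hε => ?_⟩
  obtain rfl | hc := (ge_of_tendsto' hlim fun n => norm_nonneg _).eq_or_lt
  · have h2D : Tendsto (fun n => 2 * D n) atTop (𝓝 0) := by simpa using hD.const_mul 2
    filter_upwards [h2D.eventually (gt_mem_nhds hε)] with n hn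
    linarith [norm_sub_le (u n) (v n), hu n, hv n]
  obtain ⟨δ, hδ, hUC⟩ := exists_forall_norm_add_le_two_sub_mul (E := E)
    (div_pos hε (by linarith : 0 < c + 1))
  -- the weighted average stays near `c`, whereas uniform convexity would push it below `(1 - κδ) c`
  have hgap : Tendsto (fun n => ‖L n • u n + (1 - L n) • v n‖ - (1 - κ * δ) * D n) atTop
      (𝓝 (c - (1 - κ * δ) * c)) := hlim.sub (hD.const_mul _)
  filter_upwards [hgap.eventually (lt_mem_nhds (show (0 : ℝ) < _ by nlinarith [mul_pos hκ hδ])),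
    hD.eventually (gt_mem_nhds (lt_add_one c))] with n hgapn hDn
  by_contra! hεn
  have hsep : ε / (c + 1) * D n ≤ ‖u n - v n‖ :=
    calc ε / (c + 1) * D n ≤ ε / (c + 1) * (c + 1) := by gcongr
      _ = ε := div_mul_cancel₀ _ (by linarith)
      _ ≤ ‖u n - v n‖ := hεn
  have := norm_smul_add_one_sub_smul_le (hu n) (hv n) (hUC (hu n) (hv n) hsep) hδ.le hκ.le
    (hL n).1 (hL n).2
  linarith

theorem tendsto_norm_sub_of_tendsto_norm_sum_smul_sub {ι : Type*} [Fintype ι] [DecidableEq ι]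
    {κ c : ℝ} (hκ : 0 < κ) {a : ι → ℕ → ℝ} (ha : ∀ j n, κ ≤ a j n ∧ κ ≤ 1 - a j n)
    (hsum : ∀ n, ∑ j, a j n = 1) {w : ι → ℕ → E} {p : E} {D : ℕ → ℝ}
    (hw : ∀ j n, ‖w j n - p‖ ≤ D n) (hD : Tendsto D atTop (𝓝 c))
    (hlim : Tendsto (fun n => ‖∑ j, a j n • w j n - p‖) atTop (𝓝 c)) (j k : ι) :
    Tendsto (fun n => ‖w j n - w k n‖) atTop (𝓝 0) := by
  have hsum_sub : ∀ n, ∑ j, a j n • (w j n - p) = ∑ j, a j n • w j n - p := fun n => by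
    simp only [smul_sub, Finset.sum_sub_distrib, ← Finset.sum_smul, hsum, one_smul]
  suffices h : ∀ j, Tendsto (fun n => ‖w j n - ∑ j, a j n • w j n‖) atTop (𝓝 0) by
    refine squeeze_zero (fun n => norm_nonneg _) (fun n => norm_sub_le_norm_sub_add_norm_sub
      _ (∑ j, a j n • w j n) _) ?_
    simpa [norm_sub_rev] using (h j).add (h k)
  intro j
  have hpos : ∀ n, 0 < 1 - a j n := fun n => hκ.trans_le (ha j n).2
  -- reduce to two points: `w j n` against the renormalised average of the others
  set v : ℕ → E := fun n => (1 - a j n)⁻¹ • ∑ i ∈ Finset.univ.erase j, a i n • (w i n - p)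
  have hsplit : ∀ n, a j n • (w j n - p) + (1 - a j n) • v n = ∑ j, a j n • w j n - p := by
    intro n
    rw [smul_inv_smul₀ (hpos n).ne',
      Finset.add_sum_erase _ (fun i => a i n • (w i n - p)) (Finset.mem_univ j), hsum_sub]
  have hv : ∀ n, ‖v n‖ ≤ D n := by
    intro n
    have hrest : ‖∑ i ∈ Finset.univ.erase j, a i n • (w i n - p)‖ ≤ (1 - a j n) * D n :=
      calc ‖∑ i ∈ Finset.univ.erase j, a i n • (w i n - p)‖
          ≤ ∑ i ∈ Finset.univ.erase j, a i n * D n := norm_sum_le_of_le _ fun i _ => by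
            rw [norm_smul_of_nonneg (hκ.le.trans (ha i n).1)]
            exact mul_le_mul_of_nonneg_left (hw i n) (hκ.le.trans (ha i n).1)
        _ = (1 - a j n) * D n := by
          rw [← Finset.sum_mul, Finset.sum_erase_eq_sub (Finset.mem_univ j), hsum]
    rw [norm_smul_of_nonneg (inv_nonneg.2 (hpos n).le), inv_mul_le_iff₀ (hpos n)]
    exact hrest
  have hlim' : Tendsto (fun n => ‖a j n • (w j n - p) + (1 - a j n) • v n‖) atTop (𝓝 c) := by
    simpa only [hsplit] using hlim
  refine squeeze_zero (fun n => norm_nonneg _) (fun n => ?_)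
    (tendsto_norm_sub_of_tendsto_norm_smul_add hκ (ha j) (hw j) hv hD hlim')
  rw [← sub_sub_sub_cancel_right _ _ p, ← hsplit,
    show ∀ (L : ℝ) (u v : E), u - (L • u + (1 - L) • v) = (1 - L) • (u - v) from
      fun L u v => by module, norm_smul_of_nonneg (hpos n).le]
  exact mul_le_of_le_one_left (norm_nonneg _) (by linarith [(ha j n).1])

end UniformConvex

theorem Fin.sum_univ_smul_cons {E : Type*} [AddCommMonoid E] [Module ℝ E] {m : ℕ}
    (c : Fin (m + 1) → ℝ) (z : E) (f : Fin m → E) :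
    ∑ j, c j • (Fin.cons z f : Fin (m + 1) → E) j = c 0 • z + ∑ i, c i.succ • f i := by
  simp [Fin.sum_univ_succ]

theorem Convex.smul_add_sum_smul_succ_mem {E : Type*} [AddCommGroup E] [Module ℝ E] {s : Set E}
    (hs : Convex ℝ s) {m : ℕ} {c : Fin (m + 1) → ℝ} (hc0 : ∀ j, 0 ≤ c j) (hc1 : ∑ j, c j = 1)
    {z : E} {f : Fin m → E} (hz : z ∈ s) (hf : ∀ i, f i ∈ s) :
    c 0 • z + ∑ i, c i.succ • f i ∈ s := by
  rw [← Fin.sum_univ_smul_cons]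
  exact hs.sum_mem (fun j _ => hc0 j) hc1 fun j _ => Fin.cases hz hf j

section Scheme

variable {E : Type*} [NormedAddCommGroup E] [NormedSpace ℝ E] {K : Set E} {m : ℕ}
  {T I : Fin m → E → E} {a b : Fin (m + 1) → ℕ → ℝ} {x y : ℕ → E}

theorem scheme_mem (hK : Convex ℝ K) (hTK : ∀ i, Set.MapsTo (T i) K K)
    (hIK : ∀ i, Set.MapsTo (I i) K K) (ha0 : ∀ j n, 0 ≤ a j n) (hasum : ∀ n, ∑ j, a j n = 1)
    (hb0 : ∀ j n, 0 ≤ b j n) (hbsum : ∀ n, ∑ j, b j n = 1) (hx0 : x 0 ∈ K)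
    (hy : ∀ n, y n = b 0 n • x n + ∑ i : Fin m, b i.succ n • (I i)^[n] (x n))
    (hxrec : ∀ n, x (n + 1) = a 0 n • x n + ∑ i : Fin m, a i.succ n • (T i)^[n] (y n))
    (n : ℕ) : x n ∈ K ∧ y n ∈ K := by
  have hyK : ∀ n, x n ∈ K → y n ∈ K := fun n hxn => hy n ▸
    hK.smul_add_sum_smul_succ_mem (hb0 · n) (hbsum n) hxn fun i => (hIK i).iterate n hxn
  have hxK : ∀ n, x n ∈ K := by
    intro n
    induction n with
    | zero => exact hx0
    | succ n ih =>
      exact hxrec n ▸ hK.smul_add_sum_smul_succ_mem (ha0 · n) (hasum n) ih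
        fun i => (hTK i).iterate n (hyK n ih)
  exact ⟨hxK n, hyK n (hxK n)⟩

theorem norm_scheme_sub_le {p : E} {s r : ℕ → ℝ} {n : ℕ} (hs0 : 0 ≤ s n) (hr0 : 0 ≤ r n)
    (hIT : ∀ i, ∀ z ∈ K, ‖(I i)^[n] z - p‖ ≤ affineMajorant s r n ‖z - p‖ ∧
      ‖(T i)^[n] z - p‖ ≤ affineMajorant s r n (affineMajorant s r n ‖z - p‖))
    (hb0 : ∀ j, 0 ≤ b j n) (hbsum : ∑ j, b j n = 1)
    (hy : y n = b 0 n • x n + ∑ i : Fin m, b i.succ n • (I i)^[n] (x n))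
    (hxK : x n ∈ K) (hyK : y n ∈ K) (j : Fin (m + 1)) :
    ‖(Fin.cons (x n) (fun i => (T i)^[n] (y n)) : Fin (m + 1) → E) j - p‖ ≤
      affineMajorant s r n (affineMajorant s r n (affineMajorant s r n ‖x n - p‖)) := by
  set A := affineMajorant s r n
  have hA : Monotone A := affineMajorant_mono hs0
  have hle : ∀ {t}, 0 ≤ t → t ≤ A t := le_affineMajorant hs0 hr0
  have hle₁ := hle (norm_nonneg (x n - p))
  have hle₂ := hle ((norm_nonneg _).trans hle₁)
  have hle₃ := hle ((norm_nonneg _).trans (hle₁.trans hle₂))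
  have hyp : ‖y n - p‖ ≤ A ‖x n - p‖ := by
    rw [← mem_closedBall_iff_norm, hy]
    exact (convex_closedBall _ _).smul_add_sum_smul_succ_mem hb0 hbsum
      (mem_closedBall_iff_norm.2 hle₁) fun i => mem_closedBall_iff_norm.2 (hIT i _ hxK).1
  refine Fin.cases ?_ (fun i => ?_) j
  · exact hle₁.trans (hle₂.trans hle₃)
  · exact (hIT i _ hyK).2.trans (hA (hA hyp))

variable [UniformConvexSpace E]

theorem tendsto_norm_sub_iterate_of_affineMajorant (hK : Convex ℝ K)
    (hTK : ∀ i, Set.MapsTo (T i) K K) (hIK : ∀ i, Set.MapsTo (I i) K K) {p : E}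
    {s r : ℕ → ℝ} (hs0 : ∀ n, 0 ≤ s n) (hr0 : ∀ n, 0 ≤ r n) (hs : Summable s) (hr : Summable r)
    (hIT : ∀ i n, ∀ z ∈ K, ‖(I i)^[n] z - p‖ ≤ affineMajorant s r n ‖z - p‖ ∧
      ‖(T i)^[n] z - p‖ ≤ affineMajorant s r n (affineMajorant s r n ‖z - p‖))
    {κ : ℝ} (hκ : 0 < κ) (ha : ∀ j n, κ ≤ a j n ∧ κ ≤ 1 - a j n) (hasum : ∀ n, ∑ j, a j n = 1)
    (hb0 : ∀ j n, 0 ≤ b j n) (hbsum : ∀ n, ∑ j, b j n = 1) (hx0 : x 0 ∈ K)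
    (hy : ∀ n, y n = b 0 n • x n + ∑ i : Fin m, b i.succ n • (I i)^[n] (x n))
    (hxrec : ∀ n, x (n + 1) = a 0 n • x n + ∑ i : Fin m, a i.succ n • (T i)^[n] (y n))
    (i : Fin m) : Tendsto (fun n => ‖x n - (T i)^[n] (y n)‖) atTop (𝓝 0) := by
  have ha0 : ∀ j n, 0 ≤ a j n := fun j n => hκ.le.trans (ha j n).1
  have hxyK := scheme_mem hK hTK hIK ha0 hasum hb0 hbsum hx0 hy hxrec
  set w : Fin (m + 1) → ℕ → E := fun j n =>
    (Fin.cons (x n) (fun i => (T i)^[n] (y n)) : Fin (m + 1) → E) j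
  set A := affineMajorant s r
  set D : ℕ → ℝ := fun n => A n (A n (A n ‖x n - p‖))
  have hw : ∀ j n, ‖w j n - p‖ ≤ D n := fun j n => norm_scheme_sub_le (hs0 n) (hr0 n)
    (fun i => hIT i n) (hb0 · n) (hbsum n) (hy n) (hxyK n).1 (hxyK n).2 j
  have hxw : ∀ n, x (n + 1) = ∑ j, a j n • w j n := fun n => by
    rw [hxrec, Fin.sum_univ_smul_cons]
  have hrec : ∀ n, ‖x (n + 1) - p‖ ≤ D n := fun n => by
    rw [← mem_closedBall_iff_norm, hxw]
    exact (convex_closedBall _ _).sum_mem (fun j _ => ha0 j n) (hasum n)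
      fun j _ => mem_closedBall_iff_norm.2 (hw j n)
  obtain ⟨C, hC⟩ := hs.tendsto_atTop_zero.bddAbove_range
  obtain ⟨c, hc⟩ := exists_tendsto_of_le_one_add_mul_add (fun n => norm_nonneg (x n - p))
    (fun n => mul_nonneg (by positivity) (hs0 n))
    (fun n => mul_nonneg (by positivity) (hr0 n)) (hs.mul_left (3 * (1 + C) ^ 2))
    (hr.mul_left (3 * (1 + C) ^ 2)) fun n => (hrec n).trans <|
      affineMajorant_three_le (hs0 n) (hC ⟨n, rfl⟩) (hr0 n) (norm_nonneg _)
  have hs' := hs.tendsto_atTop_zero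
  have hr' := hr.tendsto_atTop_zero
  have hD : Tendsto D atTop (𝓝 c) :=
    ((hc.affineMajorant hs' hr').affineMajorant hs' hr').affineMajorant hs' hr'
  have hlim : Tendsto (fun n => ‖∑ j, a j n • w j n - p‖) atTop (𝓝 c) := by
    simpa only [← hxw] using (tendsto_add_atTop_iff_nat 1).2 hc
  simpa [w] using tendsto_norm_sub_of_tendsto_norm_sum_smul_sub hκ ha hasum hw hD hlim 0 i.succ

end Scheme

theorem stmt9_general
    {X : Type*} [NormedAddCommGroup X] [NormedSpace ℝ X]
    [UniformConvexSpace X]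
    {K : Set X} (hKco : Convex ℝ K)
    {m : ℕ}
    (T I : Fin m → X → X)
    (hTK : ∀ i, Set.MapsTo (T i) K K) (hIK : ∀ i, Set.MapsTo (I i) K K)
    (μ lam tμ tlam : Fin m → ℕ → ℝ)
    (hμ0 : ∀ i n, 0 ≤ μ i n) (hlam0 : ∀ i n, 0 ≤ lam i n)
    (htμ0 : ∀ i n, 0 ≤ tμ i n) (htlam0 : ∀ i n, 0 ≤ tlam i n)
    (hμsum : ∀ i, Summable (μ i)) (hlamsum : ∀ i, Summable (lam i))
    (htμsum : ∀ i, Summable (tμ i)) (htlamsum : ∀ i, Summable (tlam i))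
    (φ ψ : Fin m → ℝ → ℝ)
    (hφmono : ∀ i, StrictMonoOn (φ i) (Set.Ici 0))
    (hφpos : ∀ i t, 0 ≤ t → 0 ≤ φ i t)
    (hψmono : ∀ i, StrictMonoOn (ψ i) (Set.Ici 0))
    (hψpos : ∀ i t, 0 ≤ t → 0 ≤ ψ i t)
    (hI : ∀ i, ∀ n, 1 ≤ n → ∀ x ∈ K, ∀ y ∈ K,
      ‖(I i)^[n] x - (I i)^[n] y‖ ≤ ‖x - y‖ + tμ i n * ψ i ‖x - y‖ + tlam i n)
    (hT : ∀ i, ∀ n, 1 ≤ n → ∀ x ∈ K, ∀ y ∈ K,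
      ‖(T i)^[n] x - (T i)^[n] y‖ ≤
        ‖(I i)^[n] x - (I i)^[n] y‖ + μ i n * φ i ‖(I i)^[n] x - (I i)^[n] y‖ + lam i n)
    (F : Set X)
    (hFdef : ∀ p, p ∈ F ↔ p ∈ K ∧ ∀ i, T i p = p ∧ I i p = p)
    (hFne : F.Nonempty)
    (M Ms N Ns : Fin m → ℝ)
    (hM : ∀ i, 0 < M i) (hMs : ∀ i, 0 < Ms i) (hN : ∀ i, 0 < N i) (hNs : ∀ i, 0 < Ns i)
    (hφbound : ∀ i ξ, M i ≤ ξ → φ i ξ ≤ Ms i * ξ)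
    (hψbound : ∀ i ζ, N i ≤ ζ → ψ i ζ ≤ Ns i * ζ)
    (alo ahi blo bhi : ℝ)
    (halo : 0 < alo) (hahi1 : ahi < 1)
    (hblo : 0 < blo)
    (a b : Fin (m + 1) → ℕ → ℝ)
    (ha : ∀ j n, a j n ∈ Set.Icc alo ahi) (hb : ∀ j n, b j n ∈ Set.Icc blo bhi)
    (hasum : ∀ n, ∑ j, a j n = 1) (hbsum : ∀ n, ∑ j, b j n = 1)
    (x y : ℕ → X) (hx0 : x 0 ∈ K)
    (hy : ∀ n, y n = b 0 n • x n + ∑ i : Fin m, b i.succ n • (I i)^[n] (x n))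
    (hxrec : ∀ n, x (n + 1) = a 0 n • x n + ∑ i : Fin m, a i.succ n • (T i)^[n] (y n))
    : ∀ i, Tendsto (fun n => ‖x n - (T i)^[n] (y n)‖) atTop (nhds 0) := by
  obtain ⟨p, hp⟩ := hFne
  obtain ⟨hpK, hpTI⟩ := (hFdef p).1 hp
  obtain ⟨s, r, hs0, hr0, hs, hr, hIT⟩ := exists_summable_affineMajorant hpK
    (fun i => (hpTI i).1) (fun i => (hpTI i).2) hμ0 hlam0 htμ0 htlam0 hμsum hlamsum htμsum
    htlamsum (fun i => (hφmono i).monotoneOn) (fun i => (hψmono i).monotoneOn)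
    (fun i => (hM i).le) (fun i => (hMs i).le) (fun i => (hN i).le) (fun i => (hNs i).le)
    (fun i => hφpos i _ (hM i).le) (fun i => hψpos i _ (hN i).le) hφbound hψbound hI hT
  have ha' : ∀ j n, min alo (1 - ahi) ≤ a j n ∧ min alo (1 - ahi) ≤ 1 - a j n := fun j n =>
    ⟨(min_le_left _ _).trans (ha j n).1, (min_le_right _ _).trans (by linarith [(ha j n).2])⟩
  exact tendsto_norm_sub_iterate_of_affineMajorant hKco hTK hIK hs0 hr0 hs hr hIT
    (lt_min halo (by linarith)) ha' hasum (fun j n => hblo.le.trans (hb j n).1) hbsum hx0 hy hxrec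

/-- under the bounded-coefficient scheme hypotheses with all maps
continuous, `lim ‖x n - (T i)ⁿ (y n)‖ = 0` for each `i`. -/
theorem stmt9
    {X : Type*} [NormedAddCommGroup X] [NormedSpace ℝ X] [CompleteSpace X]
    [UniformConvexSpace X]
    {K : Set X} (hKne : K.Nonempty) (hKcl : IsClosed K) (hKco : Convex ℝ K)
    {m : ℕ} (hm : 1 ≤ m)
    (T I : Fin m → X → X)
    (hTK : ∀ i, Set.MapsTo (T i) K K) (hIK : ∀ i, Set.MapsTo (I i) K K)
    (hTcont : ∀ i, ContinuousOn (T i) K) (hIcont : ∀ i, ContinuousOn (I i) K)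
    (μ lam tμ tlam : Fin m → ℕ → ℝ)
    (hμ0 : ∀ i n, 0 ≤ μ i n) (hlam0 : ∀ i n, 0 ≤ lam i n)
    (htμ0 : ∀ i n, 0 ≤ tμ i n) (htlam0 : ∀ i n, 0 ≤ tlam i n)
    (hμlim : ∀ i, Tendsto (μ i) atTop (nhds 0)) (hlamlim : ∀ i, Tendsto (lam i) atTop (nhds 0))
    (htμlim : ∀ i, Tendsto (tμ i) atTop (nhds 0))
    (htlamlim : ∀ i, Tendsto (tlam i) atTop (nhds 0))
    (hμsum : ∀ i, Summable (μ i)) (hlamsum : ∀ i, Summable (lam i))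
    (htμsum : ∀ i, Summable (tμ i)) (htlamsum : ∀ i, Summable (tlam i))
    (φ ψ : Fin m → ℝ → ℝ)
    (hφmono : ∀ i, StrictMonoOn (φ i) (Set.Ici 0))
    (hφcont : ∀ i, ContinuousOn (φ i) (Set.Ici 0))
    (hφ0 : ∀ i, φ i 0 = 0) (hφpos : ∀ i t, 0 ≤ t → 0 ≤ φ i t)
    (hψmono : ∀ i, StrictMonoOn (ψ i) (Set.Ici 0))
    (hψcont : ∀ i, ContinuousOn (ψ i) (Set.Ici 0))
    (hψ0 : ∀ i, ψ i 0 = 0) (hψpos : ∀ i t, 0 ≤ t → 0 ≤ ψ i t)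
    (hI : ∀ i, ∀ n, 1 ≤ n → ∀ x ∈ K, ∀ y ∈ K,
      ‖(I i)^[n] x - (I i)^[n] y‖ ≤ ‖x - y‖ + tμ i n * ψ i ‖x - y‖ + tlam i n)
    (hT : ∀ i, ∀ n, 1 ≤ n → ∀ x ∈ K, ∀ y ∈ K,
      ‖(T i)^[n] x - (T i)^[n] y‖ ≤
        ‖(I i)^[n] x - (I i)^[n] y‖ + μ i n * φ i ‖(I i)^[n] x - (I i)^[n] y‖ + lam i n)
    (F : Set X)
    (hFdef : ∀ p, p ∈ F ↔ p ∈ K ∧ ∀ i, T i p = p ∧ I i p = p)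
    (hFne : F.Nonempty)
    (M Ms N Ns : Fin m → ℝ)
    (hM : ∀ i, 0 < M i) (hMs : ∀ i, 0 < Ms i) (hN : ∀ i, 0 < N i) (hNs : ∀ i, 0 < Ns i)
    (hφbound : ∀ i ξ, M i ≤ ξ → φ i ξ ≤ Ms i * ξ)
    (hψbound : ∀ i ζ, N i ≤ ζ → ψ i ζ ≤ Ns i * ζ)
    (alo ahi blo bhi : ℝ)
    (halo : 0 < alo) (hahi : alo < ahi) (hahi1 : ahi < 1)
    (hblo : 0 < blo) (hbhi : blo < bhi) (hbhi1 : bhi < 1)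
    (a b : Fin (m + 1) → ℕ → ℝ)
    (ha : ∀ j n, a j n ∈ Set.Icc alo ahi) (hb : ∀ j n, b j n ∈ Set.Icc blo bhi)
    (hasum : ∀ n, ∑ j, a j n = 1) (hbsum : ∀ n, ∑ j, b j n = 1)
    (x y : ℕ → X) (hx0 : x 0 ∈ K)
    (hy : ∀ n, y n = b 0 n • x n + ∑ i : Fin m, b i.succ n • (I i)^[n] (x n))
    (hxrec : ∀ n, x (n + 1) = a 0 n • x n + ∑ i : Fin m, a i.succ n • (T i)^[n] (y n))
    : ∀ i, Tendsto (fun n => ‖x n - (T i)^[n] (y n)‖) atTop (nhds 0) :=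
  stmt9_general hKco T I hTK hIK μ lam tμ tlam hμ0 hlam0 htμ0 htlam0 hμsum hlamsum htμsum htlamsum φ
    ψ hφmono hφpos hψmono hψpos hI hT F hFdef hFne M Ms N Ns hM hMs hN hNs hφbound hψbound alo ahi
    blo bhi halo hahi1 hblo a b ha hb hasum hbsum x y hx0 hy hxrec
end
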